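/- arXiv:math/0610185 — 7 statements merged into one kernel-verified Lean document; each statement's English description precedes it below -/
import Mathlib

section
/- The sequence of Eulerian numbers {A_{n,i}}_{i=0}^{n-1} is unimodal: A_{n,0} ≤ A_{n,1} ≤ ⋯ ≤ A_{n,⌊(n-1)/2⌋} and A_{n,⌈(n-1)/2⌉} ≥ ⋯ ≥ A_{n,n-1}. -/
/-!
Inserting the maximum `n + 1` into a permutation of `[n]` with `d` descents, in each of its
`n + 1` slots, keeps `d` descents at the `d` descent slots and at the end, and creates one more at
the `n - 1 - d` ascent slots and at the front. Hence
`A (n+1) (i+1) = (i+2) A n (i+1) + (n-i) A n i`, while reversal gives `A n i = A n (n-1-i)`.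
Monotonicity up to the middle follows by induction on `n` from the recurrence, the middle step
itself being an instance of the symmetry; the decreasing half is its mirror image.
-/

namespace FS

/-- The word `a_0, a_1, ..., a_n, a_{n+1}` of the permutation (as a list `l` of length `n`),
with the boundary convention `a_0 = a_{n+1} = n+1`. -/
def wordext (n : ℕ) (l : List ℕ) : ℕ → ℕ := fun i => ((n + 1) :: (l ++ [n + 1])).getD i 0

/-- Number of descents of the word `l`. -/
def desL (l : List ℕ) : ℕ := (l.zip l.tail).countP (fun p => decide (p.2 < p.1))

/-- Number of peaks (boundary convention `a_0 = a_{n+1} = n+1`). -/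
def peakL (n : ℕ) (l : List ℕ) : ℕ :=
  ((Finset.Icc 1 n).filter (fun k =>
    wordext n l (k - 1) < wordext n l k ∧ wordext n l (k + 1) < wordext n l k)).card

def valleyL (n : ℕ) (l : List ℕ) : ℕ :=
  ((Finset.Icc 1 n).filter (fun k =>
    wordext n l k < wordext n l (k - 1) ∧ wordext n l k < wordext n l (k + 1))).card

/-- Number of double ascents. -/
def daL (n : ℕ) (l : List ℕ) : ℕ :=
  ((Finset.Icc 1 n).filter (fun k =>
    wordext n l (k - 1) < wordext n l k ∧ wordext n l k < wordext n l (k + 1))).card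

/-- Number of double descents. -/
def ddL (n : ℕ) (l : List ℕ) : ℕ :=
  ((Finset.Icc 1 n).filter (fun k =>
    wordext n l k < wordext n l (k - 1) ∧ wordext n l (k + 1) < wordext n l k)).card

/-- All permutations of `[n] = {1, ..., n}` as lists. -/
def perms (n : ℕ) : List (List ℕ) := (List.range' 1 n).permutations

open List

theorem zip_tail_eq_zip_dropLast_tail {α : Type*} (l : List α) :
    l.zip l.tail = l.dropLast.zip l.tail := by
  rw [zip_eq_zip_take_min, dropLast_eq_take, zip_eq_zip_take_min (l₁ := take _ _)]
  simp [take_of_length_le]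

theorem zip_tail_reverse {α : Type*} (l : List α) :
    l.reverse.zip l.reverse.tail = ((l.zip l.tail).map Prod.swap).reverse := by
  rw [zip_tail_eq_zip_dropLast_tail, zip_tail_eq_zip_dropLast_tail, zip_swap, tail_reverse,
    dropLast_reverse, zip_eq_zipWith, zip_eq_zipWith, reverse_zipWith (by simp)]

theorem fst_ne_snd_of_mem_zip_tail {α : Type*} : ∀ {l : List α}, l.Nodup →
    ∀ p ∈ l.zip l.tail, p.1 ≠ p.2
  | [], _ => by simp
  | [_], _ => by simp
  | x :: y :: t, hl => by
    simp only [tail_cons, zip_cons_cons, mem_cons, forall_eq_or_imp]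
    exact ⟨by simp_all, fst_ne_snd_of_mem_zip_tail hl.of_cons⟩

theorem desL_cons_cons (x y : ℕ) (t : List ℕ) :
    desL (x :: y :: t) = (if y < x then 1 else 0) + desL (y :: t) := by
  simp only [desL, tail_cons, zip_cons_cons, countP_cons, decide_eq_true_eq]
  omega

theorem desL_le_length_sub_one (l : List ℕ) : desL l ≤ l.length - 1 := by
  simpa [desL] using (l.zip l.tail).countP_le_length (p := fun p => decide (p.2 < p.1))

theorem desL_reverse_add_desL {l : List ℕ} (hl : l.Nodup) :
    desL l.reverse + desL l = l.length - 1 := by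
  have h :=
    length_eq_countP_add_countP (fun p : ℕ × ℕ => decide (p.1 < p.2)) (l := l.zip l.tail)
  rw [desL, desL, zip_tail_reverse, countP_reverse, countP_map]
  simp only [length_zip, length_tail, min_eq_right, Nat.sub_le] at h
  rw [h]
  congr 1
  refine countP_congr fun p hp => ?_
  have := fst_ne_snd_of_mem_zip_tail hl p hp
  simp only [decide_eq_true_eq]
  omega

theorem cons_replicate_add {α : Type*} (x : α) (k : ℕ) (s : Multiset α) :
    x ::ₘ (Multiset.replicate k x + s) = Multiset.replicate (k + 1) x + s := by
  rw [Multiset.replicate_succ, Multiset.cons_add]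

theorem cons_add_replicate {α : Type*} (x : α) (k : ℕ) (s : Multiset α) :
    x ::ₘ (s + Multiset.replicate k x) = s + Multiset.replicate (k + 1) x := by
  rw [Multiset.replicate_succ, Multiset.add_cons]

/-- The prefix `b` lets the induction run: an insertion into `u :: t` either puts `a` in front of
`u` or is an insertion into `t` behind `u`. -/
theorem map_desL_cons_permutations'Aux {a : ℕ} :
    ∀ {b : ℕ} {t : List ℕ}, b < a → (∀ x ∈ t, x < a) →
    (((permutations'Aux a t).map fun l => desL (b :: l) : List ℕ) : Multiset ℕ) =
      Multiset.replicate (desL (b :: t) + 1) (desL (b :: t)) +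
        Multiset.replicate (t.length - desL (b :: t)) (desL (b :: t) + 1)
  | b, [], hb, _ => by simp [permutations'Aux, hb.not_gt, desL]
  | b, u :: t, hb, ht => by
    have hu : u < a := ht u mem_cons_self
    have ih := map_desL_cons_permutations'Aux hu fun x hx => ht x (mem_cons_of_mem u hx)
    have hd : desL (u :: t) ≤ t.length := by simpa using desL_le_length_sub_one (u :: t)
    have hshift : ((permutations'Aux a t).map fun l => desL (b :: u :: l)) =
        ((permutations'Aux a t).map fun l => desL (u :: l)).map
          ((if u < b then 1 else 0) + ·) := by
      simp only [map_map, Function.comp_def, desL_cons_cons b u]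
    rw [permutations'Aux, map_cons, map_map, Function.comp_def, hshift, ← Multiset.cons_coe,
      ← Multiset.map_coe, ih, Multiset.map_add, Multiset.map_replicate, Multiset.map_replicate,
      desL_cons_cons b a, desL_cons_cons a u, desL_cons_cons b u, length_cons]
    simp only [hu, hb.not_gt, if_true, if_false, zero_add]
    split_ifs
    · rw [add_comm 1, cons_replicate_add]; congr 2 <;> omega
    · simp only [zero_add]
      rw [add_comm 1, cons_add_replicate]; congr 2; omega

theorem map_desL_permutations'Aux {a : ℕ} {t : List ℕ} (ht : ∀ x ∈ t, x < a) :
    (((permutations'Aux a t).map desL : List ℕ) : Multiset ℕ) =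
      Multiset.replicate (desL t + 1) (desL t) +
        Multiset.replicate (t.length - desL t) (desL t + 1) := by
  cases t with
  | nil => simp [permutations'Aux, desL]
  | cons b t =>
    have hb : b < a := ht b mem_cons_self
    have hd : desL (b :: t) ≤ t.length := by simpa using desL_le_length_sub_one (b :: t)
    rw [permutations'Aux, map_cons, map_map, Function.comp_def, ← Multiset.cons_coe,
      map_desL_cons_permutations'Aux hb fun x hx => ht x (mem_cons_of_mem b hx),
      desL_cons_cons, if_pos hb, add_comm 1, cons_add_replicate, length_cons]
    congr 2
    omega

def eulerian (n i : ℕ) : ℕ := (perms n).countP fun l => decide (desL l = i)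

theorem mem_perms {n : ℕ} {l : List ℕ} : l ∈ perms n ↔ l ~ range' 1 n := mem_permutations

theorem perms_succ_perm (n : ℕ) :
    perms (n + 1) ~ (perms n).flatMap (permutations'Aux (n + 1)) := by
  have hrange : range' 1 (n + 1) ~ (n + 1) :: range' 1 n := by
    rw [range'_concat, one_mul, Nat.add_comm 1 n]
    exact perm_append_singleton _ _
  calc perms (n + 1) ~ (range' 1 (n + 1)).permutations' := permutations_perm_permutations' _
    _ ~ ((n + 1) :: range' 1 n).permutations' := hrange.permutations'
    _ = (range' 1 n).permutations'.flatMap (permutations'Aux (n + 1)) := rfl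
    _ ~ (perms n).flatMap (permutations'Aux (n + 1)) :=
      (permutations_perm_permutations' _).symm.flatMap_right _

theorem eulerian_succ (n i : ℕ) : eulerian (n + 1) i =
    ((perms n).map fun m => (if desL m = i then desL m + 1 else 0) +
      (if desL m + 1 = i then n - desL m else 0)).sum := by
  rw [eulerian, (perms_succ_perm n).countP_eq, countP_flatMap]
  congr 1
  refine map_congr_left fun m hm => ?_
  have hm := mem_perms.1 hm
  have hlt : ∀ x ∈ m, x < n + 1 := fun x hx => by
    have := mem_range'_1.1 (hm.mem_iff.1 hx)
    omega
  have hlen : m.length = n := by simpa using hm.length_eq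
  have key := congrArg (Multiset.count i) (map_desL_permutations'Aux hlt)
  rw [Multiset.coe_count, Multiset.count_add, Multiset.count_replicate, Multiset.count_replicate,
    hlen, count, countP_map] at key
  rw [Function.comp_apply, ← key]
  exact countP_congr fun l _ => by simp

theorem sum_map_ite_eq_mul_countP {α : Type*} (L : List α) (p : α → Prop) [DecidablePred p]
    (c : ℕ) : (L.map fun x => if p x then c else 0).sum = c * L.countP fun x => decide (p x) := by
  induction L with
  | nil => simp
  | cons x L ih =>
    simp only [map_cons, sum_cons, countP_cons, ih, decide_eq_true_eq]
    split_ifs <;> ring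

theorem eulerian_succ_zero (n : ℕ) : eulerian (n + 1) 0 = eulerian n 0 := by
  rw [eulerian_succ, eulerian, ← one_mul (countP _ _), ← sum_map_ite_eq_mul_countP]
  congr 1
  refine map_congr_left fun m _ => ?_
  by_cases h : desL m = 0 <;> simp [h]

theorem eulerian_succ_succ (n i : ℕ) :
    eulerian (n + 1) (i + 1) = (i + 2) * eulerian n (i + 1) + (n - i) * eulerian n i := by
  rw [eulerian_succ, eulerian, eulerian, ← sum_map_ite_eq_mul_countP,
    ← sum_map_ite_eq_mul_countP, ← sum_map_add]
  congr 1
  refine map_congr_left fun m _ => ?_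
  congr 1 <;> split_ifs <;> omega

theorem eulerian_symm {n i : ℕ} (hi : i ≤ n - 1) : eulerian n i = eulerian n (n - 1 - i) := by
  have hrev : (perms n).map reverse ~ perms n := by
    refine (perm_ext_iff_of_nodup ((nodup_permutations _ (nodup_range' ..)).map reverse_injective)
      (nodup_permutations _ (nodup_range' ..))).2 fun l => ?_
    simp only [mem_map, mem_permutations]
    exact ⟨fun ⟨m, hm, hml⟩ => hml ▸ (reverse_perm m).trans hm,
      fun hl => ⟨l.reverse, (reverse_perm l).trans hl, reverse_reverse l⟩⟩
  rw [eulerian, ← hrev.countP_eq, countP_map]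
  refine countP_congr fun l hl => ?_
  have hl := mem_perms.1 hl
  have hlen : l.length = n := by simpa using hl.length_eq
  have hsum := desL_reverse_add_desL (hl.nodup_iff.2 (nodup_range' ..))
  have hle := desL_le_length_sub_one l
  simp only [Function.comp_apply, decide_eq_true_eq]
  omega

theorem eulerian_le_eulerian_succ {n k : ℕ} (hk : 2 * k + 2 ≤ n) :
    eulerian n k ≤ eulerian n (k + 1) := by
  induction n generalizing k with
  | zero => omega
  | succ n ih =>
    rcases (show 2 * k + 2 = n + 1 ∨ 2 * k + 2 ≤ n by omega) with hmid | hk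
    · exact ((eulerian_symm (by omega)).trans (congrArg _ (by omega))).le
    · cases k with
      | zero =>
        rw [eulerian_succ_zero, eulerian_succ_succ, Nat.sub_zero]
        have := Nat.le_mul_of_pos_left (eulerian n 0) (show 0 < n by omega)
        omega
      | succ j =>
        have h₁ := ih (k := j) (by omega)
        have h₂ := ih (k := j + 1) (by omega)
        rw [eulerian_succ_succ, eulerian_succ_succ, show n - j = n - (j + 1) + 1 by omega]
        calc (j + 2) * eulerian n (j + 1) + (n - (j + 1) + 1) * eulerian n j
            ≤ (j + 2) * eulerian n (j + 1) + (n - (j + 1) + 1) * eulerian n (j + 1) := by gcongr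
          _ = (j + 3) * eulerian n (j + 1) + (n - (j + 1)) * eulerian n (j + 1) := by ring
          _ ≤ (j + 3) * eulerian n (j + 2) + (n - (j + 1)) * eulerian n (j + 1) := by gcongr

theorem eulerian_monotoneOn (n : ℕ) : MonotoneOn (eulerian n) (Set.Iic (n / 2)) :=
  monotoneOn_of_le_succ Set.ordConnected_Iic fun k _ _ hk =>
    eulerian_le_eulerian_succ (by simp only [Set.mem_Iic, Order.succ_eq_add_one] at hk; omega)

theorem eulerian_antitoneOn (n : ℕ) : AntitoneOn (eulerian n) (Set.Icc (n / 2) (n - 1)) := by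
  intro i hi j hj hij
  simp only [Set.mem_Icc] at hi hj
  rw [eulerian_symm hi.2, eulerian_symm hj.2]
  exact eulerian_monotoneOn n (by simp; omega) (by simp; omega) (by omega)

theorem eulerian_unimodal_general (n : ℕ) :
    (∀ i j, i ≤ j → j ≤ (n - 1) / 2 →
      (perms n).countP (fun l => decide (desL l = i)) ≤
        (perms n).countP (fun l => decide (desL l = j))) ∧
    (∀ i j, n / 2 ≤ i → i ≤ j → j ≤ n - 1 →
      (perms n).countP (fun l => decide (desL l = j)) ≤
        (perms n).countP (fun l => decide (desL l = i))) :=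
  ⟨fun i j hij hj => eulerian_monotoneOn n (by simp; omega) (by simp; omega) hij,
    fun i j hi hij hj => eulerian_antitoneOn n ⟨hi, by omega⟩ ⟨by omega, hj⟩ hij⟩

/-- the Eulerian numbers `A_{n,0}, …, A_{n,n-1}` form a unimodal sequence:
increasing up to `⌊(n-1)/2⌋` and decreasing from `⌈(n-1)/2⌉` on. -/
theorem eulerian_unimodal (n : ℕ) (hn : 1 ≤ n) :
    (∀ i j, i ≤ j → j ≤ (n - 1) / 2 →
      (perms n).countP (fun l => decide (desL l = i)) ≤
        (perms n).countP (fun l => decide (desL l = j))) ∧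
    (∀ i j, n / 2 ≤ i → i ≤ j → j ≤ n - 1 →
      (perms n).countP (fun l => decide (desL l = j)) ≤
        (perms n).countP (fun l => decide (desL l = i))) :=
  eulerian_unimodal_general n

end FS
end

section
/- If a polynomial p(t) = Σ_{i=0}^d a_i t^i with nonnegative real coefficients satisfies p(t) = Σ_{i=0}^{⌊d/2⌋} b_i t^i (1+t)^{d-2i} with all b_i ≥ 0, then the coefficient sequence {a_i}_{i=0}^d is symmetric (a_i = a_{d-i} for all i) and unimodal. -/
namespace FS

/-! Each `t^j (1+t)^(d-2j)` has as coefficients a shifted row of Pascal's triangle, which is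
symmetric about `d/2` and increases up to the middle. All these sequences share the centre `d/2`,
so a nonnegative combination of them is again symmetric and increasing up to the middle, which
gives unimodality. -/

open Polynomial Finset

lemma Nat.choose_monotoneOn_Iic_half (n : ℕ) : MonotoneOn n.choose (Set.Iic ((n + 1) / 2)) := by
  refine monotoneOn_of_le_add_one Set.ordConnected_Iic fun r _ _ hr => ?_
  rcases Nat.lt_or_ge r (n / 2) with hlt | hge
  · exact Nat.choose_le_succ_of_lt_half_left hlt
  · have hn : n = 2 * r + 1 := by simp only [Set.mem_Iic] at hr; omega
    exact (Nat.choose_symm_of_eq_add (by omega : n = r + (r + 1))).le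

section Semiring

variable {R : Type*} [Semiring R]

lemma coeff_sum_range_C_mul_X_pow (a : ℕ → R) {n k : ℕ} (hk : k < n) :
    (∑ i ∈ range n, C (a i) * X ^ i).coeff k = a k := by
  simp [hk]

lemma coeff_X_pow_mul_one_add_X_pow (j m i : ℕ) :
    ((X : R[X]) ^ j * (1 + X) ^ m).coeff i = if j ≤ i then (m.choose (i - j) : R) else 0 := by
  rw [coeff_X_pow_mul', coeff_one_add_X_pow]

noncomputable def gammaPoly (d : ℕ) (b : ℕ → R) : R[X] :=
  ∑ j ∈ range (d / 2 + 1), C (b j) * X ^ j * (1 + X) ^ (d - 2 * j)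

lemma coeff_gammaPoly (d : ℕ) (b : ℕ → R) (i : ℕ) :
    (gammaPoly d b).coeff i =
      ∑ j ∈ range (d / 2 + 1), b j * ((X : R[X]) ^ j * (1 + X) ^ (d - 2 * j)).coeff i := by
  simp only [gammaPoly, finsetSum_coeff, mul_assoc, coeff_C_mul]

lemma coeff_X_pow_mul_one_add_X_pow_sub {d j i : ℕ} (hj : 2 * j ≤ d) (hi : i ≤ d) :
    ((X : R[X]) ^ j * (1 + X) ^ (d - 2 * j)).coeff (d - i) =
      ((X : R[X]) ^ j * (1 + X) ^ (d - 2 * j)).coeff i := by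
  simp only [coeff_X_pow_mul_one_add_X_pow]
  by_cases hji : j ≤ i <;> by_cases hjdi : j ≤ d - i
  · rw [if_pos hji, if_pos hjdi, ← Nat.choose_symm (by omega : i - j ≤ d - 2 * j)]
    congr 2
    omega
  · rw [if_pos hji, if_neg hjdi, Nat.choose_eq_zero_of_lt (by omega), Nat.cast_zero]
  · rw [if_neg hji, if_pos hjdi, Nat.choose_eq_zero_of_lt (by omega), Nat.cast_zero]
  · rw [if_neg hji, if_neg hjdi]

lemma coeff_gammaPoly_sub {d i : ℕ} (b : ℕ → R) (hi : i ≤ d) :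
    (gammaPoly d b).coeff (d - i) = (gammaPoly d b).coeff i := by
  simp only [coeff_gammaPoly]
  refine sum_congr rfl fun j hj => ?_
  rw [coeff_X_pow_mul_one_add_X_pow_sub (by grind) hi]

end Semiring

section OrderedSemiring

variable {R : Type*} [Semiring R] [PartialOrder R] [IsOrderedRing R]

lemma monotoneOn_coeff_X_pow_mul_one_add_X_pow {d j : ℕ} (hj : 2 * j ≤ d) :
    MonotoneOn (((X : R[X]) ^ j * (1 + X) ^ (d - 2 * j)).coeff) (Set.Iic ((d + 1) / 2)) := by
  intro i _ i' hi' hii'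
  simp only [Set.mem_Iic] at hi'
  simp only [coeff_X_pow_mul_one_add_X_pow]
  split_ifs with hji hji'
  · exact Nat.mono_cast <| Nat.choose_monotoneOn_Iic_half _
      (Set.mem_Iic.2 (by omega)) (Set.mem_Iic.2 (by omega)) (by omega)
  · omega
  · exact Nat.cast_nonneg _
  · exact le_rfl

lemma monotoneOn_coeff_gammaPoly (d : ℕ) {b : ℕ → R} (hb : ∀ i, 0 ≤ b i) :
    MonotoneOn (gammaPoly d b).coeff (Set.Iic ((d + 1) / 2)) := by
  intro i hi i' hi' hii'
  simp only [coeff_gammaPoly]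
  refine sum_le_sum fun j hj => mul_le_mul_of_nonneg_left ?_ (hb j)
  exact monotoneOn_coeff_X_pow_mul_one_add_X_pow (by grind) hi hi' hii'

end OrderedSemiring

lemma exists_unimodal_of_symm_of_monotoneOn {α : Type*} [Preorder α] {a : ℕ → α} {d : ℕ}
    (hsymm : ∀ i ≤ d, a i = a (d - i)) (hmono : MonotoneOn a (Set.Iic ((d + 1) / 2))) :
    ∃ c ≤ d, (∀ i j, i ≤ j → j ≤ c → a i ≤ a j) ∧
      (∀ i j, c ≤ i → i ≤ j → j ≤ d → a j ≤ a i) := by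
  refine ⟨d / 2, by omega, fun i j hij hj => hmono (by grind) (by grind) hij,
    fun i j hi hij hj => ?_⟩
  rw [hsymm i (by omega), hsymm j hj]
  exact hmono (by grind) (by grind) (by omega)

theorem gamma_nonneg_implies_symmetric_unimodal_general (d : ℕ) (a b : ℕ → ℝ)
    (hb : ∀ i, 0 ≤ b i)
    (h : ∑ i ∈ Finset.range (d + 1), Polynomial.C (a i) * Polynomial.X ^ i =
        ∑ i ∈ Finset.range (d / 2 + 1),
          Polynomial.C (b i) * Polynomial.X ^ i * (1 + Polynomial.X) ^ (d - 2 * i)) :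
    (∀ i ≤ d, a i = a (d - i)) ∧
    ∃ c ≤ d, (∀ i j, i ≤ j → j ≤ c → a i ≤ a j) ∧
      (∀ i j, c ≤ i → i ≤ j → j ≤ d → a j ≤ a i) := by
  have ha : ∀ i ≤ d, a i = (gammaPoly d b).coeff i := fun i hi => by
    rw [← coeff_sum_range_C_mul_X_pow a (Nat.lt_succ_of_le hi), h, gammaPoly]
  have hsymm : ∀ i ≤ d, a i = a (d - i) := fun i hi => by
    rw [ha i hi, ha (d - i) (Nat.sub_le d i), coeff_gammaPoly_sub b hi]
  refine ⟨hsymm, exists_unimodal_of_symm_of_monotoneOn hsymm fun i hi i' hi' hii' => ?_⟩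
  have hd : (d + 1) / 2 ≤ d := by omega
  rw [ha i (le_trans hi hd), ha i' (le_trans hi' hd)]
  exact monotoneOn_coeff_gammaPoly d hb hi hi' hii'

/-- if `p(t) = Σ_{i=0}^d a_i t^i` with nonnegative coefficients has an
expansion `p(t) = Σ_{i=0}^{⌊d/2⌋} b_i t^i (1+t)^{d-2i}` with all `b_i ≥ 0`, then the
sequence `a_0, …, a_d` is symmetric and unimodal. -/
theorem gamma_nonneg_implies_symmetric_unimodal (d : ℕ) (a b : ℕ → ℝ)
    (ha : ∀ i, 0 ≤ a i) (hb : ∀ i, 0 ≤ b i)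
    (h : ∑ i ∈ Finset.range (d + 1), Polynomial.C (a i) * Polynomial.X ^ i =
        ∑ i ∈ Finset.range (d / 2 + 1),
          Polynomial.C (b i) * Polynomial.X ^ i * (1 + Polynomial.X) ^ (d - 2 * i)) :
    (∀ i ≤ d, a i = a (d - i)) ∧
    ∃ c ≤ d, (∀ i j, i ≤ j → j ≤ c → a i ≤ a j) ∧
      (∀ i j, c ≤ i → i ≤ j → j ≤ d → a j ≤ a i) :=
  gamma_nonneg_implies_symmetric_unimodal_general d a b hb h

end FS
end

section
/- For each x ∈ [n], the map φ_x : S_n → S_n defined via the x-factorization is an involution: φ_x(φ_x(π)) = π for all π ∈ S_n. -/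
/-! `φ_x` only exchanges the blocks `w₂` and `w₄` flanking `x`, both made of letters smaller than
`x`. In `w₁ w₄ x w₂ w₅` the maximal blocks of small letters around `x` are again `w₄` and `w₂`,
bounded by the same last letter of `w₁` and first letter of `w₅`, so a second application of
`φ_x` exchanges them back. -/

namespace FS

/-- The Foata–Strehl involution `φ_x`: writing `l = w₁ w₂ x w₄ w₅` where `w₂` (resp. `w₄`)
is the maximal contiguous subword immediately to the left (resp. right) of `x` all of whose
letters are smaller than `x`, we set `φ_x(l) = w₁ w₄ x w₂ w₅`. -/
def phi (x : ℕ) (l : List ℕ) : List ℕ :=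
  if x ∈ l then
    let L := l.takeWhile (fun y => y != x)
    let R := (l.dropWhile (fun y => y != x)).tail
    let w1 := (L.reverse.dropWhile (fun y => decide (y < x))).reverse
    let w2 := (L.reverse.takeWhile (fun y => decide (y < x))).reverse
    let w4 := R.takeWhile (fun y => decide (y < x))
    let w5 := R.dropWhile (fun y => decide (y < x))
    w1 ++ w4 ++ x :: (w2 ++ w5)
  else l

/-- The (1-indexed) position of the letter `x` in `l`. -/
def posIdx (l : List ℕ) (x : ℕ) : ℕ := l.idxOf x + 1

/-- `x` is a double ascent of `l` (boundary convention `a_0 = a_{n+1} = n+1`). -/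
def isDA (n : ℕ) (l : List ℕ) (x : ℕ) : Bool :=
  l.contains x && decide (wordext n l (posIdx l x - 1) < x)
    && decide (x < wordext n l (posIdx l x + 1))

/-- `x` is a double descent of `l` (boundary convention `a_0 = a_{n+1} = n+1`). -/
def isDD (n : ℕ) (l : List ℕ) (x : ℕ) : Bool :=
  l.contains x && decide (x < wordext n l (posIdx l x - 1))
    && decide (wordext n l (posIdx l x + 1) < x)

/-- The modified Foata–Strehl involution `φ'_x`. -/
def phi' (n x : ℕ) (l : List ℕ) : List ℕ :=
  if isDA n l x || isDD n l x then phi x l else l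


end FS

namespace List

variable {α : Type*}

theorem exists_append_forall_not_head? (p : α → Bool) (l : List α) :
    ∃ A B, l = A ++ B ∧ (∀ a ∈ A, p a) ∧ ∀ b ∈ B.head?, ¬ p b := by
  refine ⟨_, _, takeWhile_append_dropWhile.symm, fun _ => mem_takeWhile_imp, fun b hb => ?_⟩
  have := head?_dropWhile_not p l
  rw [Option.mem_def.mp hb] at this
  simpa using this

variable {p : α → Bool}

theorem takeWhile_append_of_forall_not_head? {A B : List α} (hA : ∀ a ∈ A, p a)
    (hB : ∀ b ∈ B.head?, ¬ p b) : (A ++ B).takeWhile p = A := by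
  rw [takeWhile_append_of_pos hA]
  cases B with
  | nil => simp
  | cons b B => simp [hB b rfl]

theorem dropWhile_append_of_forall_not_head? {A B : List α} (hA : ∀ a ∈ A, p a)
    (hB : ∀ b ∈ B.head?, ¬ p b) : (A ++ B).dropWhile p = B := by
  rw [dropWhile_append_of_pos hA]
  cases B with
  | nil => simp
  | cons b B => simp [hB b rfl]

end List

namespace FS

/-- `w₁ ++ w₂ ++ x :: (w₄ ++ w₅)` is the `x`-factorization `w₁ w₂ x w₄ w₅`. The condition `x ∉ w₁`
makes the displayed `x` the first occurrence, where `phi` splits; the conditions on the last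
letter of `w₁` and the first letter of `w₅` express the maximality of `w₂` and `w₄`. -/
structure IsFactorization (x : ℕ) (w₁ w₂ w₄ w₅ : List ℕ) : Prop where
  notMem_w₁ : x ∉ w₁
  le_getLast?_w₁ : ∀ b ∈ w₁.getLast?, x ≤ b
  lt_of_mem_w₂ : ∀ a ∈ w₂, a < x
  lt_of_mem_w₄ : ∀ a ∈ w₄, a < x
  le_head?_w₅ : ∀ b ∈ w₅.head?, x ≤ b

section

variable {x : ℕ} {w₁ w₂ w₄ w₅ : List ℕ}

theorem IsFactorization.swap (h : IsFactorization x w₁ w₂ w₄ w₅) : IsFactorization x w₁ w₄ w₂ w₅ :=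
  ⟨h.notMem_w₁, h.le_getLast?_w₁, h.lt_of_mem_w₄, h.lt_of_mem_w₂, h.le_head?_w₅⟩

theorem exists_isFactorization {l : List ℕ} (hx : x ∈ l) :
    ∃ w₁ w₂ w₄ w₅, IsFactorization x w₁ w₂ w₄ w₅ ∧ l = w₁ ++ w₂ ++ x :: (w₄ ++ w₅) := by
  obtain ⟨u, v, hxu, rfl, -⟩ := List.exists_erase_eq hx
  obtain ⟨w₂', w₁', hu, hw₂, hw₁⟩ :=
    List.exists_append_forall_not_head? (fun y => decide (y < x)) u.reverse
  obtain ⟨w₄, w₅, rfl, hw₄, hw₅⟩ :=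
    List.exists_append_forall_not_head? (fun y => decide (y < x)) v
  rw [List.reverse_eq_iff, List.reverse_append] at hu
  subst hu
  refine ⟨w₁'.reverse, w₂'.reverse, w₄, w₅, ⟨?_, ?_, ?_, ?_, ?_⟩, by simp⟩
  · exact fun h => hxu (by simp [h])
  · simpa using hw₁
  · simpa using hw₂
  · simpa using hw₄
  · simpa using hw₅

theorem phi_of_isFactorization (h : IsFactorization x w₁ w₂ w₄ w₅) :
    phi x (w₁ ++ w₂ ++ x :: (w₄ ++ w₅)) = w₁ ++ w₄ ++ x :: (w₂ ++ w₅) := by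
  have hw₁₂ : ∀ a ∈ w₁ ++ w₂, (a != x) = true := by
    simp only [List.mem_append, bne_iff_ne, ne_eq]
    rintro a (ha | ha) rfl
    exacts [h.notMem_w₁ ha, lt_irrefl _ (h.lt_of_mem_w₂ _ ha)]
  have hx : ∀ b ∈ (x :: (w₄ ++ w₅)).head?, ¬ (b != x) = true := by simp
  have hw₂ : ∀ a ∈ w₂.reverse, decide (a < x) = true := by simpa using h.lt_of_mem_w₂
  have hw₁ : ∀ b ∈ w₁.reverse.head?, ¬ decide (b < x) = true := by
    simpa using h.le_getLast?_w₁
  have hw₄ : ∀ a ∈ w₄, decide (a < x) = true := by simpa using h.lt_of_mem_w₄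
  have hw₅ : ∀ b ∈ w₅.head?, ¬ decide (b < x) = true := by simpa using h.le_head?_w₅
  rw [phi, if_pos (by simp)]
  simp only [List.takeWhile_append_of_forall_not_head? hw₁₂ hx,
    List.dropWhile_append_of_forall_not_head? hw₁₂ hx, List.tail_cons, List.reverse_append,
    List.takeWhile_append_of_forall_not_head? hw₂ hw₁,
    List.dropWhile_append_of_forall_not_head? hw₂ hw₁,
    List.takeWhile_append_of_forall_not_head? hw₄ hw₅,
    List.dropWhile_append_of_forall_not_head? hw₄ hw₅, List.reverse_reverse]

end

theorem phi_involution_general (x : ℕ) (l : List ℕ) :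
    phi x (phi x l) = l := by
  by_cases hx : x ∈ l
  · obtain ⟨w₁, w₂, w₄, w₅, h, rfl⟩ := exists_isFactorization hx
    rw [phi_of_isFactorization h, phi_of_isFactorization h.swap]
  · simp [phi, hx]

/-- each `φ_x` is an involution on `S_n`. -/
theorem phi_involution (n x : ℕ) (l : List ℕ) (hx : x ∈ Finset.Icc 1 n)
    (hl : l.Perm (List.range' 1 n)) :
    phi x (phi x l) = l :=
  phi_involution_general x l

end FS
end

section
/- If x ∈ [n] is a double ascent of π ∈ S_n (with boundary convention a_0 = a_{n+1} = n+1), then des(φ'_x(π)) = des(π) + 1, and if x is a double descent then des(φ'_x(π)) = des(π) - 1, where φ'_x is the modified Foata–Strehl involution. -/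
namespace FS

/-!
Write `π = w₁ w₂ x w₄ w₅` as in the definition of `φ_x`. If `x` is a double ascent then
`w₄ = []` and `w₂ ≠ []`, and `φ_x` moves `x` from the right of the block `w₂` of letters
smaller than `x` to its left; if `x` is a double descent then `w₂ = []`, `w₄ ≠ []`, and `x`
moves from the left of `w₄` to its right. In both cases the neighbours outside the block are
larger than `x` (the letter of `w₁` before the block) or at least `x` (the first letter of
`w₅`), so only the junctions at the ends of the block change, and together they account for
exactly one descent.
-/

@[simp] lemma desL_nil : desL [] = 0 := rfl

@[simp] lemma desL_singleton (a : ℕ) : desL [a] = 0 := rfl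

@[simp] lemma desL_pair (a b : ℕ) : desL [a, b] = if b < a then 1 else 0 := by
  simp [desL, List.countP_cons]

lemma desL_cons_cons_s9 (a b : ℕ) (t : List ℕ) :
    desL (a :: b :: t) = desL [a, b] + desL (b :: t) := by
  simp [desL, List.countP_cons]
  omega

/-- The last term counts the descent, if any, at the junction of `l₁` and `l₂`. -/
theorem desL_append (l₁ l₂ : List ℕ) :
    desL (l₁ ++ l₂) = desL l₁ + desL l₂ + desL (l₁.getLast?.toList ++ l₂.head?.toList) := by
  induction l₁ with
  | nil => cases l₂ <;> simp
  | cons a l ih =>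
    cases l with
    | nil =>
      cases l₂ with
      | nil => simp
      | cons b t => rw [List.singleton_append, desL_cons_cons_s9]; simp [add_comm]
    | cons b t =>
      rw [List.cons_append, List.cons_append, desL_cons_cons_s9, ← List.cons_append, ih,
        desL_cons_cons_s9 a b t, List.getLast?_cons_cons]
      omega

theorem desL_append_cons_append {A B C : List ℕ} {x : ℕ}
    (hA : ∀ a ∈ A.getLast?, x < a) (hB : B ≠ []) (hBx : ∀ b ∈ B, b < x)
    (hC : ∀ c ∈ C.head?, x ≤ c) :
    desL (A ++ x :: (B ++ C)) = desL (A ++ (B ++ x :: C)) + 1 := by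
  obtain ⟨b, B', rfl⟩ := List.exists_cons_of_ne_nil hB
  obtain ⟨e, he⟩ := Option.isSome_iff_exists.mp (List.getLast?_isSome.mpr hB)
  have hex : e < x := hBx e (List.mem_of_mem_getLast? he)
  have hbx : b < x := hBx b List.mem_cons_self
  have hxC : desL (x :: C) = desL C := by
    rw [← List.singleton_append, desL_append]
    cases hc : C.head? <;> simp_all
  have hBC : desL (b :: B' ++ C) = desL (b :: B') + desL C := by
    rw [desL_append, he]
    cases hc : C.head? with
    | none => simp
    | some c => simp [(hex.trans_le (hC c hc)).not_gt]
  have hBxC : desL (b :: B' ++ x :: C) = desL (b :: B') + desL C := by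
    rw [desL_append, he, hxC]
    simp [hex.not_gt]
  have hxBC : desL (x :: (b :: B' ++ C)) = desL (b :: B' ++ C) + 1 := by
    rw [List.cons_append, desL_cons_cons_s9, ← List.cons_append]
    simp [hbx]
    omega
  have hjunction : desL (A.getLast?.toList ++ [x]) = desL (A.getLast?.toList ++ [b]) := by
    cases ha : A.getLast? with
    | none => simp
    | some a => simp [hA a ha, hbx.trans (hA a ha)]
  rw [desL_append A, desL_append A]
  simp only [List.head?_cons, List.cons_append, Option.toList_some] at hjunction ⊢
  simp only [List.cons_append] at hxBC hBC hBxC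
  omega

lemma le_of_mem_head?_dropWhile {l : List ℕ} {x a : ℕ}
    (ha : a ∈ (l.dropWhile (· < x)).head?) : x ≤ a := by
  have hne : l.dropWhile (· < x) ≠ [] := by rintro h; simp [h] at ha
  have := List.head_dropWhile_not (· < x) hne
  rw [List.head?_eq_some_head hne, Option.mem_some_iff] at ha
  simpa [ha] using this

lemma takeWhile_lt_eq_nil {l : List ℕ} {x : ℕ} (h : ∀ c ∈ l.head?, x ≤ c) :
    l.takeWhile (· < x) = [] := by
  cases l with
  | nil => rfl
  | cons c l => exact List.takeWhile_cons_of_neg (by simpa using h c rfl)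

lemma dropWhile_lt_eq_self {l : List ℕ} {x : ℕ} (h : ∀ c ∈ l.head?, x ≤ c) :
    l.dropWhile (· < x) = l := by
  cases l with
  | nil => rfl
  | cons c l => exact List.dropWhile_cons_of_neg (by simpa using h c rfl)

lemma takeWhile_lt_ne_nil {l : List ℕ} {x c : ℕ} (hc : l.head? = some c) (hcx : c < x) :
    l.takeWhile (· < x) ≠ [] := by
  cases l with
  | nil => simp at hc
  | cons d l =>
    rw [List.head?_cons, Option.some_inj] at hc
    subst hc
    simp [hcx]

lemma mem_of_isDA {n x : ℕ} {l : List ℕ} (h : isDA n l x = true) : x ∈ l := by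
  simp only [isDA, Bool.and_eq_true, List.contains_iff_mem] at h
  exact h.1.1

lemma mem_of_isDD {n x : ℕ} {l : List ℕ} (h : isDD n l x = true) : x ∈ l := by
  simp only [isDD, Bool.and_eq_true, List.contains_iff_mem] at h
  exact h.1.1

section Factorisation

variable {n x : ℕ} {s t : List ℕ}

lemma phi_append_cons (hs : x ∉ s) :
    phi x (s ++ x :: t) =
      (s.reverse.dropWhile (· < x)).reverse ++ t.takeWhile (· < x) ++
        x :: ((s.reverse.takeWhile (· < x)).reverse ++ t.dropWhile (· < x)) := by
  have hne : ∀ a ∈ s, (a != x) = true := fun a ha => bne_iff_ne.mpr (ne_of_mem_of_not_mem ha hs)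
  simp [phi, List.takeWhile_append_of_pos hne, List.dropWhile_append_of_pos hne]

lemma posIdx_append_cons (hs : x ∉ s) : posIdx (s ++ x :: t) x = s.length + 1 := by
  simp [posIdx, List.idxOf_append_of_notMem hs]

lemma wordext_append_cons_length :
    wordext n (s ++ x :: t) s.length = s.getLast?.getD (n + 1) := by
  rcases s.eq_nil_or_concat with rfl | ⟨s, u, rfl⟩
  · rfl
  · simp [wordext, List.getD_eq_getElem?_getD]

lemma wordext_append_cons_length_add_two :
    wordext n (s ++ x :: t) (s.length + 2) = t.head?.getD (n + 1) := by
  cases t <;> simp [wordext, List.getD_eq_getElem?_getD]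

lemma isDA_append_cons (hs : x ∉ s) :
    isDA n (s ++ x :: t) x = true ↔ s.getLast?.getD (n + 1) < x ∧ x < t.head?.getD (n + 1) := by
  simp [isDA, posIdx_append_cons hs, wordext_append_cons_length,
    wordext_append_cons_length_add_two]

lemma isDD_append_cons (hs : x ∉ s) :
    isDD n (s ++ x :: t) x = true ↔ x < s.getLast?.getD (n + 1) ∧ t.head?.getD (n + 1) < x := by
  simp [isDD, posIdx_append_cons hs, wordext_append_cons_length,
    wordext_append_cons_length_add_two]

lemma append_reverse_dropWhile_takeWhile (p : ℕ → Bool) (s : List ℕ) :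
    (s.reverse.dropWhile p).reverse ++ (s.reverse.takeWhile p).reverse = s := by
  rw [← List.reverse_append, List.takeWhile_append_dropWhile, List.reverse_reverse]

theorem desL_phi_of_isDA (hxn : x ≤ n) (hs : x ∉ s) (h : isDA n (s ++ x :: t) x = true) :
    desL (phi x (s ++ x :: t)) = desL (s ++ x :: t) + 1 := by
  obtain ⟨hprev, hnext⟩ := (isDA_append_cons hs).mp h
  obtain ⟨u, hu⟩ : ∃ u, s.getLast? = some u := by
    cases hs' : s.getLast? with
    | none => rw [hs'] at hprev; simp at hprev; omega
    | some u => exact ⟨u, rfl⟩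
  rw [hu, Option.getD_some] at hprev
  have ht : ∀ c ∈ t.head?, x ≤ c := by
    intro c hc
    rw [Option.mem_def.mp hc, Option.getD_some] at hnext
    exact hnext.le
  have hw₁ : ∀ a ∈ (s.reverse.dropWhile (· < x)).reverse.getLast?, x < a := by
    intro a ha
    rw [List.getLast?_reverse] at ha
    have has : a ∈ s :=
      List.mem_reverse.mp ((List.dropWhile_sublist _).mem (List.mem_of_mem_head? ha))
    exact lt_of_le_of_ne (le_of_mem_head?_dropWhile ha) (fun hax => hs (hax ▸ has))
  have hw₂ : (s.reverse.takeWhile (· < x)).reverse ≠ [] := by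
    rw [← List.head?_reverse] at hu
    exact mt List.reverse_eq_nil_iff.mp (takeWhile_lt_ne_nil hu hprev)
  have hw₂x : ∀ b ∈ (s.reverse.takeWhile (· < x)).reverse, b < x := fun b hb => by
    simpa using List.mem_takeWhile_imp (List.mem_reverse.mp hb)
  rw [phi_append_cons hs, takeWhile_lt_eq_nil ht, dropWhile_lt_eq_self ht, List.append_nil,
    desL_append_cons_append hw₁ hw₂ hw₂x ht, ← List.append_assoc,
    append_reverse_dropWhile_takeWhile]

theorem desL_phi_of_isDD (hxn : x ≤ n) (hs : x ∉ s) (h : isDD n (s ++ x :: t) x = true) :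
    desL (s ++ x :: t) = desL (phi x (s ++ x :: t)) + 1 := by
  obtain ⟨hprev, hnext⟩ := (isDD_append_cons hs).mp h
  obtain ⟨c, hc⟩ : ∃ c, t.head? = some c := by
    cases ht : t.head? with
    | none => rw [ht] at hnext; simp at hnext; omega
    | some c => exact ⟨c, rfl⟩
  rw [hc, Option.getD_some] at hnext
  have hs' : ∀ a ∈ s.getLast?, x < a := by
    intro a ha
    rwa [Option.mem_def.mp ha, Option.getD_some] at hprev
  have hs'' : ∀ a ∈ s.reverse.head?, x ≤ a := by
    simpa only [List.head?_reverse] using fun a ha => (hs' a ha).le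
  have key := desL_append_cons_append hs' (takeWhile_lt_ne_nil hc hnext)
    (fun b hb => by simpa using List.mem_takeWhile_imp hb)
    (fun c hc => le_of_mem_head?_dropWhile (l := t) hc)
  rw [phi_append_cons hs, takeWhile_lt_eq_nil hs'', dropWhile_lt_eq_self hs'',
    List.reverse_reverse, List.reverse_nil, List.nil_append, List.append_assoc, ← key,
    List.takeWhile_append_dropWhile]

end Factorisation

theorem des_phi'_general (n x : ℕ) (l : List ℕ) (hx : x ∈ Finset.Icc 1 n) :
    (isDA n l x = true → desL (phi' n x l) = desL l + 1) ∧
    (isDD n l x = true → desL (phi' n x l) = desL l - 1) := by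
  have hxn := (Finset.mem_Icc.mp hx).2
  refine ⟨fun h => ?_, fun h => ?_⟩
  · obtain ⟨s, t, rfl, hs⟩ := List.eq_append_cons_of_mem (mem_of_isDA h)
    rw [phi', h, Bool.true_or, if_pos rfl, desL_phi_of_isDA hxn hs h]
  · obtain ⟨s, t, rfl, hs⟩ := List.eq_append_cons_of_mem (mem_of_isDD h)
    rw [phi', h, Bool.or_true, if_pos rfl, desL_phi_of_isDD hxn hs h, Nat.add_sub_cancel]

/-- if `x` is a double ascent of `π` then `des(φ'_x(π)) = des(π) + 1`, and
if `x` is a double descent then `des(φ'_x(π)) = des(π) - 1`. -/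
theorem des_phi' (n x : ℕ) (l : List ℕ) (hx : x ∈ Finset.Icc 1 n)
    (hl : l.Perm (List.range' 1 n)) :
    (isDA n l x = true → desL (phi' n x l) = desL l + 1) ∧
    (isDD n l x = true → desL (phi' n x l) = desL l - 1) :=
  des_phi'_general n x l hx

end FS
end

section
/- Let i_1 < i_2 < ⋯ < i_d be the descent positions of π = a_1⋯a_n ∈ S_n. Then S(π) = r_{i_d} r_{i_{d-1}} ⋯ r_{i_1}(π), where S is the stack-sorting operator and r_i moves the letter at the descent position i rightward. -/
/-!
Write `π = L m R` with `m` its largest letter, so that `S(π) = S(L) S(R) m`. The descent tops of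
`π` are those of `L`, then `m` (when `R` is nonempty), then those of `R`. A descent top of `L` is
smaller than `m`, so `m` stops it and `r` moves it only inside `L`: by induction the moves at the
descents of `L` turn `π` into `S(L) m R`. The move at `m` carries `m` past all of `R`, which is
smaller, up to the sentinel `n + 1`, giving `S(L) R m`, and the moves at the descents of `R` then
act on `R` alone, giving `S(L) S(R) m`.
-/

namespace FS

def maxElem (l : List ℕ) : ℕ := l.foldr max 0

theorem maxElem_cons (a : ℕ) (l : List ℕ) : maxElem (a :: l) = max a (maxElem l) := rfl

theorem maxElem_mem (a : ℕ) (t : List ℕ) : maxElem (a :: t) ∈ a :: t := by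
  induction t generalizing a with
  | nil => simp [maxElem]
  | cons b t ih =>
    rw [maxElem_cons]
    rcases max_choice a (maxElem (b :: t)) with h1 | h1 <;> rw [h1]
    · exact List.mem_cons_self
    · exact List.mem_cons_of_mem _ (ih b)

theorem takeWhile_length_lt {p : ℕ → Bool} {l : List ℕ} {x : ℕ} (hx : x ∈ l)
    (hp : p x = false) : (l.takeWhile p).length < l.length := by
  have hd : l.dropWhile p ≠ [] := by
    intro h
    rw [List.dropWhile_eq_nil_iff] at h
    have := h x hx
    rw [hp] at this
    exact Bool.noConfusion this
  have h2 := congrArg List.length (List.takeWhile_append_dropWhile (p := p) (l := l))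
  rw [List.length_append] at h2
  have h3 : 0 < (l.dropWhile p).length := List.length_pos_iff.mpr hd
  omega

theorem dropWhile_tail_length_lt {p : ℕ → Bool} {l : List ℕ} (hl : 0 < l.length) :
    ((l.dropWhile p).tail).length < l.length := by
  have h1 : (l.dropWhile p).length ≤ l.length := by
    conv_rhs => rw [← List.takeWhile_append_dropWhile (p := p) (l := l)]
    rw [List.length_append]; omega
  rw [List.length_tail]
  omega

/-- The stack-sorting operator: `S([]) = []` and `S(LmR) = S(L)S(R)m` where `m` is the
greatest letter. -/
def ssort : List ℕ → List ℕ
  | [] => []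
  | a :: t =>
    ssort ((a :: t).takeWhile (fun y => y != maxElem (a :: t))) ++
      ssort (((a :: t).dropWhile (fun y => y != maxElem (a :: t))).tail) ++
      [maxElem (a :: t)]
termination_by l => l.length
decreasing_by
  · exact takeWhile_length_lt (maxElem_mem a t) (by simp)
  · exact dropWhile_tail_length_lt (by simp)


/-- `r` applied to the letter `x` of `l` (with boundary sentinel `n+1`): `x` is removed and
reinserted between the first pair of consecutive letters `a_j, a_{j+1}` to its right with
`a_j < x < a_{j+1}`. -/
def rv (n x : ℕ) (l : List ℕ) : List ℕ :=
  let R := (l.dropWhile (fun y => y != x)).tail ++ [n + 1]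
  (l.takeWhile (fun y => y != x) ++ R.takeWhile (fun y => decide (y < x)) ++
      x :: R.dropWhile (fun y => decide (y < x))).dropLast

theorem takeWhile_append_cons_of_neg {α : Type*} {p : α → Bool} {s : α} (hs : p s = false)
    (T Z : List α) : (T ++ s :: Z).takeWhile p = T.takeWhile p := by
  induction T with
  | nil => simp [hs]
  | cons a t ih => by_cases h : p a <;> simp [h, ih]

theorem dropWhile_append_cons_of_neg {α : Type*} {p : α → Bool} {s : α} (hs : p s = false)
    (T Z : List α) : (T ++ s :: Z).dropWhile p = T.dropWhile p ++ s :: Z := by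
  induction T with
  | nil => simp [hs]
  | cons a t ih => by_cases h : p a <;> simp [h, ih]

theorem maxElem_eq_of_mem {l : List ℕ} {m : ℕ} (hm : m ∈ l) (hle : ∀ y ∈ l, y ≤ m) :
    maxElem l = m :=
  le_antisymm (List.max_le_of_forall_le l m hle) (List.le_max_of_le hm le_rfl)

theorem exists_eq_append_cons_forall_lt {l : List ℕ} (hl : l.Nodup) (hne : l ≠ []) :
    ∃ L m R, l = L ++ m :: R ∧ (∀ y ∈ L, y < m) ∧ ∀ y ∈ R, y < m := by
  obtain ⟨a, t, rfl⟩ := List.exists_cons_of_ne_nil hne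
  have hle : ∀ y ∈ a :: t, y ≤ maxElem (a :: t) := fun y hy => List.le_max_of_le hy le_rfl
  obtain ⟨L, R, hLR, -⟩ := List.eq_append_cons_of_mem (maxElem_mem a t)
  generalize maxElem (a :: t) = m at hLR hle
  rw [hLR] at hl hle
  have hm : m ∉ L ++ R := (List.nodup_cons.1 (List.nodup_middle.1 hl)).1
  have hlt : ∀ y ∈ L ++ R, y < m := fun y hy =>
    (hle y (List.perm_middle.symm.subset (List.mem_cons_of_mem _ hy))).lt_of_ne
      (ne_of_mem_of_not_mem hy hm)
  exact ⟨L, m, R, hLR, fun y hy => hlt y (by simp [hy]), fun y hy => hlt y (by simp [hy])⟩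

theorem ssort_perm (l : List ℕ) : (ssort l).Perm l := by
  induction l using ssort.induct with
  | case1 => rw [ssort]
  | case2 a t ihL ihR =>
    rw [ssort]
    set p : ℕ → Bool := fun y => y != maxElem (a :: t)
    have hne : (a :: t).dropWhile p ≠ [] := fun h => by
      simpa [p] using List.dropWhile_eq_nil_iff.1 h _ (maxElem_mem a t)
    have hhead : ((a :: t).dropWhile p).head hne = maxElem (a :: t) := by
      simpa [p] using List.head_dropWhile_not p hne
    calc List.Perm _ ((a :: t).takeWhile p ++ ((a :: t).dropWhile p).tail ++ [maxElem (a :: t)]) :=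
          (ihL.append ihR).append (List.Perm.refl _)
      List.Perm _ ((a :: t).takeWhile p ++ maxElem (a :: t) :: ((a :: t).dropWhile p).tail) :=
          (List.perm_append_singleton _ _).trans List.perm_middle.symm
      _ = a :: t := by rw [← hhead, List.cons_head_tail, List.takeWhile_append_dropWhile]

theorem ssort_append_cons {L R : List ℕ} {m : ℕ} (hL : ∀ y ∈ L, y < m) (hR : ∀ y ∈ R, y < m) :
    ssort (L ++ m :: R) = ssort L ++ ssort R ++ [m] := by
  have hmax : maxElem (L ++ m :: R) = m := by
    refine maxElem_eq_of_mem (by simp) fun y hy => ?_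
    simp only [List.mem_append, List.mem_cons] at hy
    rcases hy with hy | rfl | hy
    exacts [(hL y hy).le, le_rfl, (hR y hy).le]
  have hne : ∀ y ∈ L, (y != m) = true := fun y hy => by simpa using (hL y hy).ne
  obtain ⟨a, t, hat⟩ : ∃ a t, L ++ m :: R = a :: t := List.exists_cons_of_ne_nil (by simp)
  rw [hat, ssort, ← hat, hmax, List.takeWhile_append_of_pos hne, List.dropWhile_append_of_pos hne]
  simp

theorem rv_append_cons {n x : ℕ} {P : List ℕ} (T : List ℕ) (hP : x ∉ P) (hx : x ≤ n) :
    rv n x (P ++ x :: T) =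
      P ++ T.takeWhile (fun y => decide (y < x)) ++ x :: T.dropWhile (fun y => decide (y < x)) := by
  have hne : ∀ y ∈ P, (y != x) = true := fun y hy => by simpa using ne_of_mem_of_not_mem hy hP
  have hstop : decide (n + 1 < x) = false := by simp; omega
  dsimp only [rv]
  rw [List.takeWhile_append_of_pos hne, List.dropWhile_append_of_pos hne,
    List.takeWhile_cons_of_neg (by simp), List.dropWhile_cons_of_neg (by simp), List.tail_cons,
    List.append_nil,
    takeWhile_append_cons_of_neg (p := fun y => decide (y < x)) hstop,
    dropWhile_append_cons_of_neg (p := fun y => decide (y < x)) hstop,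
    ← List.cons_append, ← List.append_assoc, List.dropLast_concat]

theorem rv_perm {n x : ℕ} {w : List ℕ} (hw : x ∈ w) (hx : x ≤ n) : (rv n x w).Perm w := by
  obtain ⟨P, T, rfl, hP⟩ := List.eq_append_cons_of_mem hw
  rw [rv_append_cons T hP hx, List.append_assoc, List.perm_append_left_iff]
  exact List.perm_middle.trans (by rw [List.takeWhile_append_dropWhile])

theorem rv_append_cons_of_forall_lt {n x : ℕ} {P T : List ℕ} (hP : x ∉ P) (hT : ∀ y ∈ T, y < x)
    (hx : x ≤ n) : rv n x (P ++ x :: T) = P ++ T ++ [x] := by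
  rw [rv_append_cons T hP hx, List.takeWhile_eq_self_iff.2 (by simpa using hT),
    List.dropWhile_eq_nil_iff.2 (by simpa using hT)]

theorem rv_append_append_cons {n x m : ℕ} {A B : List ℕ} (R : List ℕ) (hA : x ∉ A) (hB : x ∈ B)
    (hxm : x < m) (hx : x ≤ n) : rv n x (A ++ B ++ m :: R) = A ++ rv n x B ++ m :: R := by
  obtain ⟨P, T, rfl, hP⟩ := List.eq_append_cons_of_mem hB
  have hm : decide (m < x) = false := by simp; omega
  have hAP : x ∉ A ++ P := by simp [hA, hP]
  rw [show A ++ (P ++ x :: T) ++ m :: R = A ++ P ++ x :: (T ++ m :: R) by simp,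
    rv_append_cons _ hAP hx, rv_append_cons T hP hx,
    takeWhile_append_cons_of_neg (p := fun y => decide (y < x)) hm,
    dropWhile_append_cons_of_neg (p := fun y => decide (y < x)) hm]
  simp

theorem foldl_rv_append_append_cons {n m : ℕ} (A R : List ℕ) (hm : m ≤ n) {ds : List ℕ} :
    ∀ {B : List ℕ}, (∀ x ∈ ds, x ∈ B ∧ x ∉ A ∧ x < m) →
      ds.foldl (fun w x => rv n x w) (A ++ B ++ m :: R) =
        A ++ ds.foldl (fun w x => rv n x w) B ++ m :: R := by
  induction ds with
  | nil => simp
  | cons x ds ih =>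
    intro B hds
    obtain ⟨hxB, hxA, hxm⟩ := hds x List.mem_cons_self
    have hxn : x ≤ n := by omega
    rw [List.foldl_cons, List.foldl_cons, rv_append_append_cons R hxA hxB hxm hxn]
    refine ih fun y hy => ?_
    obtain ⟨hyB, hyA, hym⟩ := hds y (List.mem_cons_of_mem x hy)
    exact ⟨(rv_perm hxB hxn).mem_iff.2 hyB, hyA, hym⟩

theorem zip_tail_eq_map_range' {α : Type*} (l : List α) (d : α) :
    l.zip l.tail =
      (List.range' 1 (l.length - 1)).map (fun i => (l.getD (i - 1) d, l.getD i d)) := by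
  apply List.ext_getElem
  · simp
  · intro i h1 h2
    simp only [List.length_map, List.length_range'] at h2
    simp [Nat.add_comm 1 i, List.getElem?_eq_getElem (by omega : i < l.length),
      List.getElem?_eq_getElem (by omega : i + 1 < l.length)]

def descentTops (l : List ℕ) : List ℕ := ((l.zip l.tail).filter (fun p => p.2 < p.1)).map Prod.fst

theorem descentTops_eq_map_filter_range' (l : List ℕ) :
    descentTops l = ((List.range' 1 (l.length - 1)).filter
      (fun i => decide (l.getD i 0 < l.getD (i - 1) 0))).map (fun i => l.getD (i - 1) 0) := by
  rw [descentTops, zip_tail_eq_map_range' l 0, List.filter_map, List.map_map]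
  rfl

theorem descentTops_cons_cons (a b : ℕ) (t : List ℕ) :
    descentTops (a :: b :: t) =
      if b < a then a :: descentTops (b :: t) else descentTops (b :: t) := by
  by_cases h : b < a <;> simp [descentTops, h]

theorem mem_of_mem_descentTops {l : List ℕ} {x : ℕ} (hx : x ∈ descentTops l) : x ∈ l := by
  obtain ⟨p, hp, rfl⟩ := List.mem_map.1 hx
  exact (List.of_mem_zip (List.mem_filter.1 hp).1).1

theorem descentTops_append_cons {L : List ℕ} {m : ℕ} (R : List ℕ) (hL : ∀ y ∈ L, y < m) :
    descentTops (L ++ m :: R) = descentTops L ++ descentTops (m :: R) := by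
  induction L with
  | nil => rfl
  | cons a L ih =>
    cases L with
    | nil => simp [(hL a List.mem_cons_self).not_gt, descentTops]
    | cons c L =>
      rw [List.cons_append, List.cons_append, descentTops_cons_cons, descentTops_cons_cons,
        ← List.cons_append, ih fun y hy => hL y (List.mem_cons_of_mem a hy)]
      split_ifs <;> rfl

theorem ssort_eq_foldl_rv {n : ℕ} {l : List ℕ} (hl : l.Nodup) (hn : ∀ y ∈ l, y ≤ n) :
    ssort l = (descentTops l).foldl (fun w x => rv n x w) l := by
  induction h : l.length using Nat.strong_induction_on generalizing l with
  | _ k ih =>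
    subst h
    rcases eq_or_ne l [] with rfl | hne
    · rw [ssort]; rfl
    obtain ⟨L, m, R, rfl, hL, hR⟩ := exists_eq_append_cons_forall_lt hl hne
    have hmn : m ≤ n := hn m (by simp)
    have hsubR : R.Sublist (L ++ m :: R) :=
      (List.sublist_cons_self m R).trans (List.sublist_append_right L _)
    have ihL : ssort L = (descentTops L).foldl (fun w x => rv n x w) L :=
      ih _ (by simp) (hl.sublist (List.sublist_append_left _ _))
        (fun y hy => hn y (List.mem_append_left _ hy)) rfl
    have ihR : ssort R = (descentTops R).foldl (fun w x => rv n x w) R :=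
      ih _ (by simp; omega) (hl.sublist hsubR) (fun y hy => hn y (hsubR.subset hy)) rfl
    have hdisj : ∀ x ∈ m :: R, x ∉ ssort L := fun x hx hxL =>
      List.disjoint_of_nodup_append hl ((ssort_perm L).subset hxL) hx
    have stageL : (descentTops L).foldl (fun w x => rv n x w) (L ++ m :: R) = ssort L ++ m :: R := by
      simpa [ihL] using foldl_rv_append_append_cons [] R hmn (ds := descentTops L) (B := L)
        fun x hx =>
          ⟨mem_of_mem_descentTops hx, List.not_mem_nil, hL x (mem_of_mem_descentTops hx)⟩
    rw [ssort_append_cons hL hR, descentTops_append_cons R hL, List.foldl_append, stageL]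
    cases R with
    | nil => simp [descentTops, ssort]
    | cons b R =>
      have hR' (x) (hx : x ∈ descentTops (b :: R)) : x ∈ b :: R ∧ x ∉ ssort L ∧ x < m :=
        have hxR := mem_of_mem_descentTops hx
        ⟨hxR, hdisj x (List.mem_cons_of_mem m hxR), hR x hxR⟩
      rw [descentTops_cons_cons, if_pos (hR b List.mem_cons_self), List.foldl_cons,
        rv_append_cons_of_forall_lt (hdisj m List.mem_cons_self) hR hmn,
        foldl_rv_append_append_cons (ssort L) [] hmn hR', ihR]

/-- if `i_1 < ⋯ < i_d` are the descent positions of `π = a_1⋯a_n`, then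
`S(π) = r_{i_d} r_{i_{d-1}} ⋯ r_{i_1}(π)` (the operator `r` is applied first at the
smallest descent, to the letter `a_{i_1}`, and so on). -/
theorem ssort_eq_rmoves (n : ℕ) (l : List ℕ) (hl : l.Perm (List.range' 1 n)) :
    ssort l =
      List.foldl (fun w x => rv n x w) l
        (((List.range' 1 (n - 1)).filter
            (fun i => decide (l.getD i 0 < l.getD (i - 1) 0))).map
          (fun i => l.getD (i - 1) 0)) := by
  have hlen : l.length = n := by simp [hl.length_eq]
  have hn : ∀ y ∈ l, y ≤ n := fun y hy => by
    have := List.mem_range'_1.1 (hl.subset hy)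
    omega
  rw [ssort_eq_foldl_rv (hl.nodup_iff.2 List.nodup_range') hn, descentTops_eq_map_filter_range',
    hlen]

end FS
end

section
/- The generalized pattern statistic (2-31) is invariant under the Foata–Strehl involutions: for every π ∈ S_n and x ∈ [n], (2-31)(φ'_x(π)) = (2-31)(π), where φ'_x is the modified Foata–Strehl involution. -/
/-! Read `s231` as a sum, over the adjacent pairs `a b`, of the number of earlier letters strictly
between `b` and `a`. Bordering the word with `n + 1` on both sides leaves this sum unchanged, and
then in both cases `φ'_x` exchanges `a x B c` and `a B x c`, where all letters of `B` are smaller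
than `x` and `x < a, c`. Ascending pairs count nothing; the pairs inside `B` see the same earlier
letters apart from `x`, which exceeds them, and the pairs after `c` see the same ones; finally
`a x, x b₁` contribute as much as `a b₁` because, `x` occurring once, the letters in `(b₁, a)` are
those in `(b₁, x)` together with those in `(x, a)`. -/

namespace FS

/-- The generalized pattern statistic `(2-31)`: the number of pairs `1 ≤ i < j ≤ n-1`
with `a_{j+1} < a_i < a_j`. -/
def s231 (l : List ℕ) : ℕ :=
  ((Finset.Icc 1 (l.length - 1) ×ˢ Finset.Icc 1 (l.length - 1)).filter
    (fun p => p.1 < p.2 ∧ l.getD p.2 0 < l.getD (p.1 - 1) 0 ∧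
      l.getD (p.1 - 1) 0 < l.getD (p.2 - 1) 0)).card

open Finset

def countIoo (p : List ℕ) (b a : ℕ) : ℕ := p.countP fun y => b < y ∧ y < a

lemma countIoo_eq_zero_of_le {b a : ℕ} (h : a ≤ b) (p : List ℕ) : countIoo p b a = 0 := by
  simp only [countIoo, List.countP_eq_zero, decide_eq_true_eq, not_and, not_lt]
  omega

lemma countIoo_append_singleton {b a z : ℕ} (h : z ≤ b ∨ a ≤ z) (p : List ℕ) :
    countIoo (p ++ [z]) b a = countIoo p b a := by
  simp only [countIoo, List.countP_append, List.countP_singleton, decide_eq_true_eq]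
  split_ifs <;> omega

lemma countIoo_add_countIoo {b x a : ℕ} (hbx : b < x) (hxa : x < a) {p : List ℕ} (hx : x ∉ p) :
    countIoo p b x + countIoo p x a = countIoo p b a := by
  induction p with
  | nil => rfl
  | cons y p ih =>
    obtain ⟨hxy, hxp⟩ := not_or.1 (List.mem_cons.not.1 hx)
    have hsplit := ih hxp
    simp only [countIoo, List.countP_cons, decide_eq_true_eq] at hsplit ⊢
    split_ifs <;> omega

/-- The number of occurrences of `2-31` in `pre ++ l` whose adjacent `31` lies in `l`. -/
def s231Suffix : List ℕ → List ℕ → ℕ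
  | pre, a :: b :: t => countIoo pre b a + s231Suffix (pre ++ [a]) (b :: t)
  | _, _ => 0

@[simp] lemma s231Suffix_singleton (pre : List ℕ) (a : ℕ) : s231Suffix pre [a] = 0 := rfl

lemma s231Suffix_cons_cons (pre : List ℕ) (a b : ℕ) (t : List ℕ) :
    s231Suffix pre (a :: b :: t) = countIoo pre b a + s231Suffix (pre ++ [a]) (b :: t) := rfl

lemma s231Suffix_nil_cons (a : ℕ) (l : List ℕ) : s231Suffix [] (a :: l) = s231Suffix [a] l := by
  cases l
  · rfl
  · exact Nat.zero_add _

lemma s231Suffix_perm : ∀ {p q : List ℕ}, p.Perm q → ∀ l, s231Suffix p l = s231Suffix q l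
  | _, _, _, [] | _, _, _, [_] => rfl
  | _, _, h, a :: b :: t => by
    rw [s231Suffix_cons_cons, s231Suffix_cons_cons, countIoo, countIoo, h.countP_eq,
      s231Suffix_perm (h.append_right [a])]

lemma s231Suffix_append : ∀ (pre A : List ℕ) (c : ℕ) (l : List ℕ),
    s231Suffix pre (A ++ c :: l) = s231Suffix pre (A ++ [c]) + s231Suffix (pre ++ A) (c :: l)
  | pre, [], c, l => by simp
  | pre, [a], c, l => by simp [s231Suffix_cons_cons]
  | pre, a :: a' :: A, c, l => by
    have ih := s231Suffix_append (pre ++ [a]) (a' :: A) c l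
    simp only [List.cons_append, s231Suffix_cons_cons] at ih ⊢
    rw [ih]
    simp [add_assoc]

lemma s231Suffix_append_singleton_of_le {z : ℕ} :
    ∀ {l : List ℕ}, (∀ y ∈ l, y ≤ z) → ∀ pre, s231Suffix (pre ++ [z]) l = s231Suffix pre l
  | [], _, _ | [_], _, _ => rfl
  | a :: b :: t, hz, pre => by
    have hperm : (pre ++ [z] ++ [a]).Perm (pre ++ [a] ++ [z]) := by
      simpa using (List.Perm.swap a z []).append_left pre
    rw [s231Suffix_cons_cons, s231Suffix_cons_cons,
      countIoo_append_singleton (Or.inr (hz a (by simp))), s231Suffix_perm hperm,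
      s231Suffix_append_singleton_of_le (fun y hy => hz y (by simp_all))]

lemma s231Suffix_append_of_le {z : ℕ} {l : List ℕ} (hz : ∀ y ∈ l, y ≤ z) (pre : List ℕ) :
    s231Suffix pre (l ++ [z]) = s231Suffix pre l := by
  obtain rfl | ⟨L, y, rfl⟩ := l.eq_nil_or_concat'
  · rfl
  · rw [List.append_assoc, List.singleton_append, s231Suffix_append, s231Suffix_cons_cons,
      countIoo_eq_zero_of_le (hz y (by simp))]
    simp

lemma s231Suffix_slide {x c : ℕ} {B : List ℕ} (hB : ∀ b ∈ B, b < x) (hxc : x < c)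
    (pre C : List ℕ) :
    s231Suffix (pre ++ [x]) (B ++ c :: C) = s231Suffix pre (B ++ x :: c :: C) := by
  obtain rfl | ⟨B, b, rfl⟩ := B.eq_nil_or_concat'
  · rw [List.nil_append, List.nil_append, s231Suffix_cons_cons, countIoo_eq_zero_of_le hxc.le,
      zero_add]
  · have hbx : b < x := hB b (by simp)
    have hperm : (pre ++ [x] ++ B ++ [b]).Perm (pre ++ B ++ [b] ++ [x]) := by
      simpa only [List.append_assoc] using
        (List.perm_append_comm (l₁ := [x]) (l₂ := B ++ [b])).append_left pre
    rw [List.append_assoc B [b], List.singleton_append, List.append_assoc B [b],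
      List.singleton_append, s231Suffix_append, s231Suffix_append pre B b,
      s231Suffix_append_singleton_of_le (fun y hy => (hB y hy).le), s231Suffix_cons_cons,
      s231Suffix_cons_cons, s231Suffix_cons_cons, countIoo_eq_zero_of_le (hbx.trans hxc).le,
      countIoo_eq_zero_of_le hbx.le, countIoo_eq_zero_of_le hxc.le, s231Suffix_perm hperm]
    simp

lemma s231Suffix_cons_move {x a c : ℕ} {B : List ℕ} (hxa : x < a) (hB : ∀ b ∈ B, b < x)
    (hxc : x < c) {pre : List ℕ} (hx : x ∉ pre) (C : List ℕ) :
    s231Suffix pre (a :: x :: (B ++ c :: C)) = s231Suffix pre (a :: (B ++ x :: c :: C)) := by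
  cases B with
  | nil => rfl
  | cons b B =>
    have hslide := s231Suffix_slide hB hxc (pre ++ [a]) C
    simp only [List.cons_append, s231Suffix_cons_cons] at hslide ⊢
    rw [hslide, countIoo_append_singleton (Or.inr hxa.le),
      ← countIoo_add_countIoo (hB b (by simp)) hxa hx]
    omega

lemma countIoo_take (l : List ℕ) {k : ℕ} (hk : k ≤ l.length) (b a : ℕ) :
    countIoo (l.take k) b a = #{i ∈ range k | b < l.getD i 0 ∧ l.getD i 0 < a} := by
  induction k with
  | zero => rfl
  | succ k ih =>
    have hkl : k < l.length := hk
    rw [List.take_add_one, countIoo, List.countP_append, ← countIoo, ih hkl.le, range_add_one,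
      filter_insert, List.getElem?_eq_getElem hkl]
    split_ifs with h <;> simp_all [card_insert_of_notMem]

lemma s231Suffix_eq_sum : ∀ pre l : List ℕ, s231Suffix pre l =
    ∑ j ∈ range (l.length - 1), countIoo (pre ++ l.take j) (l.getD (j + 1) 0) (l.getD j 0)
  | _, [] | _, [_] => rfl
  | pre, a :: b :: t => by
    rw [s231Suffix_cons_cons, s231Suffix_eq_sum (pre ++ [a]) (b :: t),
      show (a :: b :: t).length - 1 = (b :: t).length - 1 + 1 by simp, sum_range_succ',
      add_comm (countIoo pre b a)]
    congr 1
    · exact sum_congr rfl fun j _ => by simp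
    · simp

lemma s231_eq_sum (l : List ℕ) : s231 l = ∑ j ∈ range (l.length - 1),
    #{i ∈ range j | l.getD (j + 1) 0 < l.getD i 0 ∧ l.getD i 0 < l.getD j 0} := by
  rw [← card_sigma, s231]
  refine card_nbij' (fun p => ⟨p.2 - 1, p.1 - 1⟩) (fun q => (q.2 + 1, q.1 + 1)) ?_ ?_ ?_ ?_
  · rintro ⟨i, j⟩ hp
    simp only [mem_coe, mem_filter, mem_product, mem_Icc] at hp
    obtain ⟨j, rfl⟩ : ∃ j', j = j' + 1 := ⟨j - 1, by omega⟩
    simp only [mem_coe, mem_sigma, mem_filter, mem_range, Nat.add_sub_cancel] at hp ⊢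
    omega
  · rintro ⟨j, i⟩ hq
    simp only [mem_coe, mem_sigma, mem_filter, mem_range] at hq
    simp only [mem_coe, mem_filter, mem_product, mem_Icc, Nat.add_sub_cancel]
    omega
  · rintro ⟨i, j⟩ hp
    simp only [mem_coe, mem_filter, mem_product, mem_Icc] at hp
    simp only [Prod.mk.injEq]
    omega
  · rintro ⟨j, i⟩ -
    simp

lemma s231_eq_s231Suffix (l : List ℕ) : s231 l = s231Suffix [] l := by
  rw [s231_eq_sum, s231Suffix_eq_sum]
  refine sum_congr rfl fun j hj => ?_
  rw [List.nil_append, countIoo_take _ (by simp at hj; omega)]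

lemma s231_eq_s231Suffix_border {N : ℕ} {l : List ℕ} (hN : ∀ y ∈ l, y ≤ N) :
    s231 l = s231Suffix [] (N :: (l ++ [N])) := by
  have hN' : ∀ y ∈ l ++ [N], y ≤ N := by simpa [or_imp, forall_and] using hN
  calc s231 l = s231Suffix [] l := s231_eq_s231Suffix l
    _ = s231Suffix [] (l ++ [N]) := (s231Suffix_append_of_le hN []).symm
    _ = s231Suffix [N] (l ++ [N]) := (s231Suffix_append_singleton_of_le hN' []).symm
    _ = s231Suffix [] (N :: (l ++ [N])) := (s231Suffix_nil_cons N _).symm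

theorem s231_move_past_smaller {N x : ℕ} {W B C : List ℕ}
    (hN : ∀ y ∈ W ++ x :: (B ++ C), y < N) (hxW : x ∉ W) (hW : x < W.getLast?.getD N)
    (hB : ∀ b ∈ B, b < x) (hC : x < C.head?.getD N) :
    s231 (W ++ x :: (B ++ C)) = s231 (W ++ (B ++ x :: C)) := by
  have hxN : x < N := hN x (by simp)
  obtain ⟨A, hA⟩ : ∃ A, N :: W = A ++ [W.getLast?.getD N] := by
    rcases W.eq_nil_or_concat' with rfl | ⟨W, w, rfl⟩
    · exact ⟨[], rfl⟩
    · exact ⟨N :: W, by simp⟩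
  obtain ⟨C', hC'⟩ : ∃ C', C ++ [N] = C.head?.getD N :: C' := by
    cases C <;> simp
  have hxA : x ∉ A := fun hx => by
    have : x ∈ N :: W := hA ▸ List.mem_append_left _ hx
    exact (List.mem_cons.1 this).elim hxN.ne hxW
  rw [s231_eq_s231Suffix_border (N := N) fun y hy => (hN y hy).le,
    s231_eq_s231Suffix_border (N := N) fun y hy =>
      (hN y ((List.perm_middle.append_left W).subset hy)).le]
  have hleft : N :: (W ++ x :: (B ++ C) ++ [N]) = (N :: W) ++ x :: (B ++ (C ++ [N])) := by simp
  have hright : N :: (W ++ (B ++ x :: C) ++ [N]) = (N :: W) ++ B ++ x :: (C ++ [N]) := by simp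
  rw [hleft, hright, hA, hC']
  simp only [List.append_assoc, List.cons_append, List.nil_append]
  rw [s231Suffix_append [] A _ (x :: _), s231Suffix_append [] A _ (B ++ _), List.nil_append,
    s231Suffix_cons_move hW hB hC hxA]

lemma posIdx_append_cons_s16 {x : ℕ} {L : List ℕ} (hx : x ∉ L) (R : List ℕ) :
    posIdx (L ++ x :: R) x = L.length + 1 := by
  rw [posIdx, List.idxOf_append_of_notMem hx, List.idxOf_cons_self]

lemma wordext_length (n x : ℕ) (L R : List ℕ) :
    wordext n (L ++ x :: R) L.length = L.getLast?.getD (n + 1) := by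
  rcases L.eq_nil_or_concat' with rfl | ⟨L, a, rfl⟩
  · rfl
  · simp [wordext]

lemma wordext_length_add_two (n x : ℕ) (L R : List ℕ) :
    wordext n (L ++ x :: R) (L.length + 2) = R.head?.getD (n + 1) := by
  cases R <;> simp [wordext]

lemma mem_of_isDA_or_isDD {n x : ℕ} {l : List ℕ} (h : (isDA n l x || isDD n l x) = true) :
    x ∈ l := by
  unfold isDA isDD at h
  aesop

lemma isDA_append_cons_s16 {n x : ℕ} {L : List ℕ} (hx : x ∉ L) (R : List ℕ) :
    isDA n (L ++ x :: R) x = true ↔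
      L.getLast?.getD (n + 1) < x ∧ x < R.head?.getD (n + 1) := by
  simp [isDA, posIdx_append_cons_s16 hx, wordext_length, wordext_length_add_two]

lemma isDD_append_cons_s16 {n x : ℕ} {L : List ℕ} (hx : x ∉ L) (R : List ℕ) :
    isDD n (L ++ x :: R) x = true ↔
      x < L.getLast?.getD (n + 1) ∧ R.head?.getD (n + 1) < x := by
  simp [isDD, posIdx_append_cons_s16 hx, wordext_length, wordext_length_add_two]

lemma phi_append_cons_s16 {x : ℕ} {L : List ℕ} (hx : x ∉ L) (R : List ℕ) :
    phi x (L ++ x :: R) =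
      (L.reverse.dropWhile (fun y => decide (y < x))).reverse
        ++ R.takeWhile (fun y => decide (y < x))
        ++ x :: ((L.reverse.takeWhile (fun y => decide (y < x))).reverse
        ++ R.dropWhile (fun y => decide (y < x))) := by
  have hne : ∀ y ∈ L, (y != x) = true := fun y hy => bne_iff_ne.2 fun h => hx (h ▸ hy)
  simp [phi, List.takeWhile_append, List.dropWhile_append, List.takeWhile_eq_self_iff.2 hne,
    List.dropWhile_eq_nil_iff.2 hne]

lemma takeWhile_lt_eq_nil_s16 {x N : ℕ} {l : List ℕ} (h : x < l.head?.getD N) :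
    l.takeWhile (fun y => decide (y < x)) = [] := by
  cases l with
  | nil => rfl
  | cons a l => simp_all [le_of_lt]

lemma dropWhile_lt_eq_self_s16 {x N : ℕ} {l : List ℕ} (h : x < l.head?.getD N) :
    l.dropWhile (fun y => decide (y < x)) = l := by
  cases l with
  | nil => rfl
  | cons a l => simp_all [le_of_lt]

lemma lt_head?_dropWhile_getD {x N : ℕ} {l : List ℕ} (hxl : x ∉ l) (hxN : x < N) :
    x < (l.dropWhile fun y => decide (y < x)).head?.getD N := by
  cases h : (l.dropWhile fun y => decide (y < x)).head? with
  | none => exact hxN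
  | some c =>
    have hc : c ∈ l := (List.dropWhile_sublist _).subset (List.mem_of_head? h)
    have hcx : ¬ c < x := by simpa [h] using List.head?_dropWhile_not (fun y => decide (y < x)) l
    exact lt_of_le_of_ne (not_lt.1 hcx) fun hxc => hxl (hxc ▸ hc)

lemma s231_phi_of_isDA {n x : ℕ} {L R : List ℕ} (hN : ∀ y ∈ L ++ x :: R, y < n + 1)
    (hxL : x ∉ L) (h : isDA n (L ++ x :: R) x = true) :
    s231 (phi x (L ++ x :: R)) = s231 (L ++ x :: R) := by
  rw [isDA_append_cons_s16 hxL] at h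
  rw [phi_append_cons_s16 hxL, takeWhile_lt_eq_nil_s16 h.2, dropWhile_lt_eq_self_s16 h.2, List.append_nil]
  set W := (L.reverse.dropWhile fun y => decide (y < x)).reverse
  set B := (L.reverse.takeWhile fun y => decide (y < x)).reverse
  have hW : x < W.getLast?.getD (n + 1) := by
    rw [List.getLast?_reverse]
    exact lt_head?_dropWhile_getD (List.mem_reverse.not.2 hxL) (hN x (by simp))
  have hB : ∀ b ∈ B, b < x := fun b hb => by
    simpa using List.mem_takeWhile_imp (List.mem_reverse.1 hb)
  have hL : L = W ++ B := by
    rw [← List.reverse_append, List.takeWhile_append_dropWhile, List.reverse_reverse]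
  clear_value W B
  subst hL
  rw [List.append_assoc]
  refine s231_move_past_smaller (fun y hy => hN y ?_) (fun hx => hxL (by simp [hx])) hW hB h.2
  simpa only [List.append_assoc] using (List.perm_middle.append_left W).symm.subset hy

lemma s231_phi_of_isDD {n x : ℕ} {L R : List ℕ} (hN : ∀ y ∈ L ++ x :: R, y < n + 1)
    (hxL : x ∉ L) (hxR : x ∉ R) (h : isDD n (L ++ x :: R) x = true) :
    s231 (phi x (L ++ x :: R)) = s231 (L ++ x :: R) := by
  rw [isDD_append_cons_s16 hxL] at h
  have hL : x < L.reverse.head?.getD (n + 1) := by rw [List.head?_reverse]; exact h.1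
  rw [phi_append_cons_s16 hxL, takeWhile_lt_eq_nil_s16 hL, dropWhile_lt_eq_self_s16 hL, List.reverse_reverse,
    List.reverse_nil, List.nil_append]
  set B := R.takeWhile fun y => decide (y < x)
  set C := R.dropWhile fun y => decide (y < x)
  have hB : ∀ b ∈ B, b < x := fun b hb => by simpa using List.mem_takeWhile_imp hb
  have hC : x < C.head?.getD (n + 1) := lt_head?_dropWhile_getD hxR (hN x (by simp))
  have hR : R = B ++ C := List.takeWhile_append_dropWhile.symm
  clear_value B C
  subst hR
  rw [List.append_assoc]
  exact (s231_move_past_smaller hN hxL h.1 hB hC).symm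

theorem s231_phi'_general (n x : ℕ) (l : List ℕ) (hl : l.Perm (List.range' 1 n)) :
    s231 (phi' n x l) = s231 l := by
  rw [phi']
  split_ifs with h
  · obtain ⟨L, R, rfl⟩ := List.append_of_mem (mem_of_isDA_or_isDD h)
    have hnd := List.nodup_middle.1 (hl.nodup_iff.2 List.nodup_range')
    have hxLR : x ∉ L ++ R := (List.nodup_cons.1 hnd).1
    have hxL : x ∉ L := fun hx => hxLR (List.mem_append_left R hx)
    have hxR : x ∉ R := fun hx => hxLR (List.mem_append_right L hx)
    have hN : ∀ y ∈ L ++ x :: R, y < n + 1 := fun y hy => by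
      have := List.mem_range'_1.1 (hl.subset hy)
      omega
    rcases Bool.or_eq_true_iff.1 h with hDA | hDD
    · exact s231_phi_of_isDA hN hxL hDA
    · exact s231_phi_of_isDD hN hxL hxR hDD
  · rfl

/-- the statistic `(2-31)` is invariant under the modified Foata–Strehl
involutions: `(2-31)(φ'_x(π)) = (2-31)(π)`. -/
theorem s231_phi' (n x : ℕ) (l : List ℕ) (hx : x ∈ Finset.Icc 1 n)
    (hl : l.Perm (List.range' 1 n)) :
    s231 (phi' n x l) = s231 l :=
  s231_phi'_general n x l hl

end FS
end

section
/- The bistatistic (veh', SIVEH) is Euler–Mahonian on S_n: it has the same joint distribution as (des, MAJ), i.e., Σ_{π∈S_n} s^{veh'(π)} q^{SIVEH(π)} = Σ_{π∈S_n} s^{des(π)} q^{MAJ(π)}. Equivalently, there is a bijection Θ : S_n → S_n with EV(Θ(π)) = Des(π) for all π. -/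
/-!
Induction on `n`: every permutation of `S_{n+1}` arises exactly once by inserting the letter
`n + 1` into a permutation of `S_n`. The inserted letter is a child of its right neighbour (of the
root if it comes last) and every other vertex keeps its height, so the new `EV` set is determined by
the old one and the insertion slot, and the same holds for the descent set. For a fixed
`S ⊆ {1, …, n - 1}` the two rules produce the same multiset of sets over the `n + 1` slots:
inserting for `Des` at `p` has the effect of inserting for `EV` at `p - 1` if `p - 1 ∈ S`, and
otherwise at the first gap of `S` from `p` on. Hence `EV` and `Des` have the same distribution on
`S_n`, which gives the generating function identity, and matching the fibres gives `Θ`.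
-/

namespace FS

/-- In the increasing unordered tree of `l` (0-indexed positions), the parent of the
vertex at position `i` is the leftmost position `j > i` with `l[j] < l[i]`
(`none` means the parent is the root `0`). -/
def parentIdx (l : List ℕ) (i : ℕ) : Option ℕ :=
  ((List.range l.length).filter (fun j => decide (i < j) && decide (l.getD j 0 < l.getD i 0))).head?

/-- The height of the vertex at position `i` in the increasing unordered tree of `l`
(children of the root have height 1). -/
def heightIdx (l : List ℕ) (i : ℕ) : ℕ :=
  match h : parentIdx l i with
  | none => 1
  | some j => if hj : i < j ∧ j ≤ l.length then heightIdx l j + 1 else 0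
termination_by l.length + 1 - i
decreasing_by omega

/-- `EV(l)`: the set of (1-indexed) positions whose vertex has even height in the
increasing unordered tree of `l`. -/
def EVset (l : List ℕ) : Finset ℕ :=
  (Finset.Icc 1 l.length).filter (fun i => Even (heightIdx l (i - 1)))

/-- The descent set (1-indexed). -/
def DesSet (l : List ℕ) : Finset ℕ :=
  (Finset.Icc 1 (l.length - 1)).filter (fun i => l.getD i 0 < l.getD (i - 1) 0)

theorem card_fiber_eq_count_map {α β : Type*} [DecidableEq β] (s : Finset α) (f : α → β) (c : β) :
    Fintype.card {a : s // f a = c} = Multiset.count c (s.val.map f) := by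
  rw [Multiset.count_map, Fintype.card_subtype, Finset.univ_eq_attach,
    Finset.filter_attach (fun a => f a = c), Finset.card_map, Finset.card_attach]
  simp only [eq_comm (a := c)]
  rfl

theorem exists_bijOn_of_map_eq_map {α β : Type*} [DecidableEq β] {s : Finset α} {f g : α → β}
    (h : s.val.map f = s.val.map g) : ∃ F : α → α, Set.BijOn F s s ∧ ∀ a ∈ s, g (F a) = f a := by
  obtain ⟨e, he⟩ : ∃ e : s ≃ s, ∀ a, g (e a) = f a :=
    ⟨_, Equiv.ofFiberEquiv_map (f := fun a : s => f a) (g := fun a : s => g a) fun c =>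
      Fintype.equivOfCardEq <| by rw [card_fiber_eq_count_map, card_fiber_eq_count_map, h]⟩
  classical
  obtain ⟨F, hF⟩ : ∃ F : α → α, ∀ a (ha : a ∈ s), F a = e ⟨a, ha⟩ :=
    ⟨fun a => if ha : a ∈ s then e ⟨a, ha⟩ else a, fun a ha => dif_pos ha⟩
  refine ⟨F, ⟨fun a ha => ?_, fun a ha b hb hab => ?_, fun b hb => ?_⟩, fun a ha => ?_⟩
  · rw [hF a ha]; exact (e _).2
  · rw [hF a ha, hF b hb] at hab
    exact congrArg Subtype.val (e.injective (Subtype.ext hab))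
  · obtain ⟨⟨a, ha⟩, hab⟩ := e.surjective ⟨b, hb⟩
    exact ⟨a, ha, by rw [hF a ha, hab]⟩
  · rw [hF a ha]; exact he _

section Tree

variable {l : List ℕ} {i j : ℕ}

theorem parentIdx_eq_some_iff :
    parentIdx l i = some j ↔ i < j ∧ j < l.length ∧ l.getD j 0 < l.getD i 0 ∧
      ∀ j', i < j' → j' < j → l.getD i 0 ≤ l.getD j' 0 := by
  rw [parentIdx, List.head?_filter, List.find?_range_eq_some]
  simp only [Bool.and_eq_true, decide_eq_true_eq, List.mem_range, Bool.not_and, Bool.or_eq_true,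
    Bool.not_eq_eq_eq_not, Bool.not_true, decide_eq_false_iff_not, not_lt]
  constructor
  · rintro ⟨⟨hij, hlt⟩, hj, hmin⟩
    exact ⟨hij, hj, hlt, fun j' hij' hj' => (hmin j' hj').resolve_left (by omega)⟩
  · rintro ⟨hij, hj, hlt, hmin⟩
    exact ⟨⟨hij, hlt⟩, hj, fun j' hj' => (le_or_gt j' i).imp_right (hmin j' · hj')⟩

theorem parentIdx_eq_none_iff :
    parentIdx l i = none ↔ ∀ j, i < j → j < l.length → l.getD i 0 ≤ l.getD j 0 := by
  rw [parentIdx, List.head?_filter, List.find?_range_eq_none]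
  simp only [Bool.not_and, Bool.or_eq_true, Bool.not_eq_eq_eq_not, Bool.not_true,
    decide_eq_false_iff_not, not_lt]
  exact forall_congr' fun j => ⟨fun h hij hj => (h hj).resolve_left (by omega),
    fun h hj => (le_or_gt j i).imp_right (h · hj)⟩

theorem heightIdx_of_parentIdx_eq_none (h : parentIdx l i = none) : heightIdx l i = 1 := by
  rw [heightIdx, h]

theorem heightIdx_of_parentIdx_eq_some (h : parentIdx l i = some j) :
    heightIdx l i = heightIdx l j + 1 := by
  obtain ⟨hij, hj, -⟩ := parentIdx_eq_some_iff.1 h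
  rw [heightIdx, h]
  simp [hij, hj.le]

end Tree

section Insertion

/-- The position in `l.insertIdx k m` of the entry at position `i` of `l`. -/
def shiftIdx (k i : ℕ) : ℕ := if i < k then i else i + 1

theorem shiftIdx_lt_shiftIdx {k i j : ℕ} : shiftIdx k i < shiftIdx k j ↔ i < j := by
  unfold shiftIdx; split_ifs <;> omega

theorem exists_shiftIdx_eq {k j n : ℕ} (hk : k ≤ n) (hj : j < n + 1) (hjk : j ≠ k) :
    ∃ j₀ < n, shiftIdx k j₀ = j := by
  by_cases h : j < k
  · exact ⟨j, by omega, if_pos h⟩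
  · exact ⟨j - 1, by omega, by unfold shiftIdx; split_ifs <;> omega⟩

variable {l : List ℕ} {k m i : ℕ}

theorem getD_insertIdx (hk : k ≤ l.length) (j : ℕ) :
    (l.insertIdx k m).getD j 0 =
      if j < k then l.getD j 0 else if j = k then m else l.getD (j - 1) 0 := by
  simp only [List.getD_eq_getElem?_getD, List.getElem?_insertIdx]
  split_ifs <;> simp_all

theorem getD_insertIdx_shiftIdx (hk : k ≤ l.length) (i : ℕ) :
    (l.insertIdx k m).getD (shiftIdx k i) 0 = l.getD i 0 := by
  rw [getD_insertIdx hk]; unfold shiftIdx; split_ifs <;> first | rfl | omega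

theorem getD_insertIdx_self (hk : k ≤ l.length) : (l.insertIdx k m).getD k 0 = m := by
  rw [getD_insertIdx hk]; simp

theorem getD_lt_of_forall_lt (hm : ∀ x ∈ l, x < m) (i : ℕ) (hi : i < l.length) : l.getD i 0 < m :=
  hm _ (by rw [List.getD_eq_getElem _ _ hi]; exact List.getElem_mem _)

variable (hk : k ≤ l.length) (hm : ∀ x ∈ l, x < m)
include hk hm

theorem parentIdx_insertIdx_shiftIdx (hi : i < l.length) :
    parentIdx (l.insertIdx k m) (shiftIdx k i) = (parentIdx l i).map (shiftIdx k) := by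
  have hlen := List.length_insertIdx_of_le_length hk m
  have hval : l.getD i 0 < m := getD_lt_of_forall_lt hm i hi
  cases h : parentIdx l i with
  | none =>
    refine parentIdx_eq_none_iff.2 fun j hij hj => ?_
    rw [getD_insertIdx_shiftIdx hk]
    obtain rfl | hjk := eq_or_ne j k
    · rw [getD_insertIdx_self hk]; exact hval.le
    obtain ⟨j₀, hj₀, rfl⟩ := exists_shiftIdx_eq hk (hlen ▸ hj) hjk
    rw [getD_insertIdx_shiftIdx hk]
    exact parentIdx_eq_none_iff.1 h j₀ (shiftIdx_lt_shiftIdx.1 hij) hj₀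
  | some j =>
    obtain ⟨hij, hj, hlt, hmin⟩ := parentIdx_eq_some_iff.1 h
    refine parentIdx_eq_some_iff.2 ⟨shiftIdx_lt_shiftIdx.2 hij, ?_, ?_, fun j' hij' hj' => ?_⟩
    · rw [hlen]; unfold shiftIdx; split_ifs <;> omega
    · rwa [getD_insertIdx_shiftIdx hk, getD_insertIdx_shiftIdx hk]
    rw [getD_insertIdx_shiftIdx hk]
    obtain rfl | hjk := eq_or_ne j' k
    · rw [getD_insertIdx_self hk]; exact hval.le
    have hj'len : j' < l.length + 1 := by unfold shiftIdx at hj'; split_ifs at hj' <;> omega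
    obtain ⟨j₀, -, rfl⟩ := exists_shiftIdx_eq hk hj'len hjk
    rw [getD_insertIdx_shiftIdx hk]
    exact hmin j₀ (shiftIdx_lt_shiftIdx.1 hij') (shiftIdx_lt_shiftIdx.1 hj')

theorem heightIdx_insertIdx_shiftIdx (i : ℕ) (hi : i < l.length) :
    heightIdx (l.insertIdx k m) (shiftIdx k i) = heightIdx l i := by
  cases h : parentIdx l i with
  | none =>
    have h' := parentIdx_insertIdx_shiftIdx hk hm hi
    rw [h, Option.map_none] at h'
    rw [heightIdx_of_parentIdx_eq_none h, heightIdx_of_parentIdx_eq_none h']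
  | some j =>
    obtain ⟨hij, hj, -⟩ := parentIdx_eq_some_iff.1 h
    have h' := parentIdx_insertIdx_shiftIdx hk hm hi
    rw [h, Option.map_some] at h'
    rw [heightIdx_of_parentIdx_eq_some h, heightIdx_of_parentIdx_eq_some h',
      heightIdx_insertIdx_shiftIdx j hj]
termination_by l.length - i

theorem heightIdx_insertIdx_self :
    heightIdx (l.insertIdx k m) k = if k < l.length then heightIdx l k + 1 else 1 := by
  have hlen := List.length_insertIdx_of_le_length hk m
  split_ifs with hkl
  · have hparent : parentIdx (l.insertIdx k m) k = some (shiftIdx k k) := by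
      have hshift : shiftIdx k k = k + 1 := if_neg (lt_irrefl k)
      refine parentIdx_eq_some_iff.2 ⟨by omega, by omega, ?_, fun j' h1 h2 => by omega⟩
      rw [getD_insertIdx_shiftIdx hk, getD_insertIdx_self hk]
      exact getD_lt_of_forall_lt hm k hkl
    rw [heightIdx_of_parentIdx_eq_some hparent, heightIdx_insertIdx_shiftIdx hk hm k hkl]
  · exact heightIdx_of_parentIdx_eq_none (parentIdx_eq_none_iff.2 fun j h1 h2 => by omega)

theorem heightIdx_insertIdx (j : ℕ) (hj : j ≤ l.length) :
    heightIdx (l.insertIdx k m) j =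
      if j < k then heightIdx l j
      else if j = k then (if k < l.length then heightIdx l k + 1 else 1)
      else heightIdx l (j - 1) := by
  split_ifs with h1 h2
  · rw [← heightIdx_insertIdx_shiftIdx hk hm j (by omega), shiftIdx, if_pos h1]
  · subst h2; rw [heightIdx_insertIdx_self hk hm, if_pos ‹_›]
  · subst h2; rw [heightIdx_insertIdx_self hk hm, if_neg ‹_›]
  · rw [← heightIdx_insertIdx_shiftIdx hk hm (j - 1) (by omega), shiftIdx, if_neg (by omega),
      Nat.sub_add_cancel (by omega)]

end Insertion

section InsertMax

/- `evInsert S n p` (resp. `desInsert S n p`) is the `EV` set (resp. descent set) after a new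
largest letter is inserted at 1-indexed position `p` into a permutation of length `n` with `EV` set
(resp. descent set) `S`. The new letter becomes a child of its right neighbour, or of the root if
`p = n + 1`, and all other heights are unchanged. -/
def evInsert (S : Finset ℕ) (n p : ℕ) : Finset ℕ :=
  (Finset.Icc 1 (n + 1)).filter fun x =>
    if x < p then x ∈ S else if x = p then p ≤ n ∧ p ∉ S else x - 1 ∈ S

def desInsert (S : Finset ℕ) (n p : ℕ) : Finset ℕ :=
  (Finset.Icc 1 (n + 1)).filter fun x =>
    if x + 1 < p then x ∈ S else if x + 1 = p then False else if x = p then p ≤ n else x - 1 ∈ S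

variable {l : List ℕ} {k m : ℕ} (hk : k ≤ l.length) (hm : ∀ x ∈ l, x < m)
include hk hm

theorem EVset_insertIdx : EVset (l.insertIdx k m) = evInsert (EVset l) l.length (k + 1) := by
  ext x
  simp only [EVset, evInsert, Finset.mem_filter, Finset.mem_Icc,
    List.length_insertIdx_of_le_length hk]
  refine and_congr_right fun hx => ?_
  rw [heightIdx_insertIdx hk hm (x - 1) (by omega)]
  split_ifs <;> grind [Nat.even_add_one]

theorem DesSet_insertIdx : DesSet (l.insertIdx k m) = desInsert (DesSet l) l.length (k + 1) := by
  have hlt := getD_lt_of_forall_lt hm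
  ext x
  simp only [DesSet, desInsert, Finset.mem_filter, Finset.mem_Icc,
    List.length_insertIdx_of_le_length hk, getD_insertIdx hk]
  split_ifs <;> grind

end InsertMax

section Slots

theorem exists_le_notMem (S : Finset ℕ) (p : ℕ) : ∃ j, p ≤ j ∧ j ∉ S := by
  obtain ⟨j, hj⟩ := Infinite.exists_notMem_finset (S ∪ Finset.range p)
  simp only [Finset.mem_union, Finset.mem_range, not_or, not_lt] at hj
  exact ⟨j, hj.2, hj.1⟩

def nextGap (S : Finset ℕ) (p : ℕ) : ℕ := Nat.find (exists_le_notMem S p)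

theorem le_nextGap (S : Finset ℕ) (p : ℕ) : p ≤ nextGap S p :=
  (Nat.find_spec (exists_le_notMem S p)).1

theorem nextGap_notMem (S : Finset ℕ) (p : ℕ) : nextGap S p ∉ S :=
  (Nat.find_spec (exists_le_notMem S p)).2

theorem mem_of_le_of_lt_nextGap {S : Finset ℕ} {p j : ℕ} (hpj : p ≤ j) (hj : j < nextGap S p) :
    j ∈ S := by
  by_contra h
  exact Nat.find_min (exists_le_notMem S p) hj ⟨hpj, h⟩

theorem nextGap_le {S : Finset ℕ} {p j : ℕ} (hpj : p ≤ j) (hj : j ∉ S) : nextGap S p ≤ j :=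
  Nat.find_min' _ ⟨hpj, hj⟩

def slotMap (S : Finset ℕ) (p : ℕ) : ℕ := if p - 1 ∈ S then p - 1 else nextGap S p

variable {S : Finset ℕ} {n p : ℕ} (hS : S ⊆ Finset.Ioo 0 n)
include hS

theorem evInsert_pred_eq_desInsert (hp : p - 1 ∈ S) : evInsert S n (p - 1) = desInsert S n p := by
  have hp' := Finset.mem_Ioo.1 (hS hp)
  ext x
  simp only [evInsert, desInsert, Finset.mem_filter, Finset.mem_Icc]
  split_ifs <;> grind

theorem evInsert_nextGap_eq_desInsert (hp : p - 1 ∉ S) (hp1 : 1 ≤ p) (hpn : p ≤ n + 1) :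
    evInsert S n (nextGap S p) = desInsert S n p := by
  have hgap := nextGap_notMem S p
  have hle := le_nextGap S p
  have hrun : ∀ j, p ≤ j → j < nextGap S p → j ∈ S := fun j => mem_of_le_of_lt_nextGap
  have hbound : ∀ x ∈ S, 0 < x ∧ x < n := fun x hx => Finset.mem_Ioo.1 (hS hx)
  ext x
  simp only [evInsert, desInsert, Finset.mem_filter, Finset.mem_Icc]
  split_ifs <;> grind

theorem evInsert_slotMap (hp : p ∈ Finset.Icc 1 (n + 1)) :
    evInsert S n (slotMap S p) = desInsert S n p := by
  rw [Finset.mem_Icc] at hp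
  unfold slotMap
  split_ifs with h
  · exact evInsert_pred_eq_desInsert hS h
  · exact evInsert_nextGap_eq_desInsert hS h hp.1 hp.2

theorem slotMap_mem_Icc (hp : p ∈ Finset.Icc 1 (n + 1)) : slotMap S p ∈ Finset.Icc 1 (n + 1) := by
  rw [Finset.mem_Icc] at hp ⊢
  unfold slotMap
  split_ifs with h
  · have := Finset.mem_Ioo.1 (hS h); omega
  · have hn : n + 1 ∉ S := fun h' => by have := Finset.mem_Ioo.1 (hS h'); omega
    exact ⟨hp.1.trans (le_nextGap S p), nextGap_le hp.2 hn⟩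

omit hS in
theorem slotMap_injOn : Set.InjOn (slotMap S) (Finset.Icc 1 (n + 1) : Set ℕ) := by
  intro p₁ hp₁ p₂ hp₂ heq
  simp only [Finset.coe_Icc, Set.mem_Icc] at hp₁ hp₂
  unfold slotMap at heq
  split_ifs at heq with h₁ h₂ h₂
  · omega
  · exact (nextGap_notMem S p₂ (heq ▸ h₁)).elim
  · exact (nextGap_notMem S p₁ (by rwa [heq])).elim
  · have := le_nextGap S p₁
    have := le_nextGap S p₂
    by_contra hne
    rcases Nat.lt_or_gt_of_ne hne with hlt | hlt
    · exact h₂ (mem_of_le_of_lt_nextGap (p := p₁) (by omega) (by omega))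
    · exact h₁ (mem_of_le_of_lt_nextGap (p := p₂) (by omega) (by omega))

theorem map_evInsert_eq_map_desInsert :
    (Finset.Icc 1 (n + 1)).val.map (evInsert S n) =
      (Finset.Icc 1 (n + 1)).val.map (desInsert S n) := by
  have himage : (Finset.Icc 1 (n + 1)).image (slotMap S) = Finset.Icc 1 (n + 1) :=
    Finset.eq_of_subset_of_card_le (Finset.image_subset_iff.2 fun p hp => slotMap_mem_Icc hS hp)
      (Finset.card_image_of_injOn slotMap_injOn).ge
  calc (Finset.Icc 1 (n + 1)).val.map (evInsert S n)
      _ = ((Finset.Icc 1 (n + 1)).image (slotMap S)).val.map (evInsert S n) := by rw [himage]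
      _ = (Finset.Icc 1 (n + 1)).val.map (evInsert S n ∘ slotMap S) := by
        rw [Finset.image_val_of_injOn slotMap_injOn, Multiset.map_map]
      _ = (Finset.Icc 1 (n + 1)).val.map (desInsert S n) :=
        Multiset.map_congr rfl fun p hp => evInsert_slotMap hS hp

end Slots

section Permutations

theorem permutations'Aux_eq_map_insertIdx {α : Type*} (x : α) (s : List α) :
    List.permutations'Aux x s = (List.range (s.length + 1)).map (s.insertIdx · x) :=
  List.ext_getElem (by simp [List.length_permutations'Aux])
    fun k _ _ => by simp [List.getElem_permutations'Aux]

theorem coe_perms_succ (n : ℕ) :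
    (perms (n + 1) : Multiset (List ℕ)) =
      (perms n : Multiset (List ℕ)).bind fun σ => ↑(List.permutations'Aux (n + 1) σ) := by
  have hperms : ∀ m, (perms m : Multiset (List ℕ)) = ↑(List.range' 1 m).reverse.permutations' :=
    fun m => Multiset.coe_eq_coe.2 <|
      (List.permutations_perm_permutations' _).trans (List.reverse_perm _).symm.permutations'
  rw [hperms, hperms, List.range'_1_concat, List.reverse_append, Multiset.coe_bind]
  simp [Nat.add_comm, List.permutations']

theorem nodup_perms (n : ℕ) : (perms n).Nodup := List.nodup_permutations _ List.nodup_range'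

theorem length_of_mem_perms {n : ℕ} {σ : List ℕ} (hσ : σ ∈ perms n) : σ.length = n := by
  simpa using (List.mem_permutations.1 hσ).length_eq

theorem lt_of_mem_perms {n : ℕ} {σ : List ℕ} (hσ : σ ∈ perms n) : ∀ x ∈ σ, x < n + 1 := by
  intro x hx
  have := (List.mem_permutations.1 hσ).mem_iff.1 hx
  rw [List.mem_range'_1] at this
  omega

theorem map_perms_succ {β : Type*} {n : ℕ} (f : List ℕ → β) (g : β → ℕ → β)
    (hf : ∀ σ ∈ perms n, ∀ k ≤ n, f (σ.insertIdx k (n + 1)) = g (f σ) (k + 1)) :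
    (perms (n + 1) : Multiset (List ℕ)).map f =
      ((perms n : Multiset (List ℕ)).map f).bind fun b => (Finset.Icc 1 (n + 1)).val.map (g b) := by
  rw [coe_perms_succ, Multiset.map_bind, Multiset.bind_map]
  refine Multiset.bind_congr fun σ hσ => ?_
  have hIcc : (Finset.Icc 1 (n + 1)).val = ((List.range (n + 1)).map (1 + ·) : Multiset ℕ) := by
    rw [← List.range'_eq_map_range]; rfl
  rw [permutations'Aux_eq_map_insertIdx, hIcc, length_of_mem_perms hσ, Multiset.map_coe,
    Multiset.map_coe, List.map_map, List.map_map]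
  congr 1
  refine List.map_congr_left fun k hk => ?_
  rw [Function.comp_apply, hf σ hσ k (Nat.lt_succ_iff.1 (List.mem_range.1 hk)), Nat.add_comm]
  rfl

end Permutations

theorem EVset_subset_Ioo (l : List ℕ) : EVset l ⊆ Finset.Ioo 0 l.length := by
  intro x hx
  simp only [EVset, Finset.mem_filter, Finset.mem_Icc] at hx
  obtain ⟨⟨hx1, hxl⟩, heven⟩ := hx
  refine Finset.mem_Ioo.2 ⟨hx1, lt_of_le_of_ne hxl fun hlast => ?_⟩
  have hroot : parentIdx l (x - 1) = none := parentIdx_eq_none_iff.2 fun j h1 h2 => by omega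
  rw [heightIdx_of_parentIdx_eq_none hroot] at heven
  exact Nat.not_even_one heven

theorem map_EVset_perms (n : ℕ) :
    (perms n : Multiset (List ℕ)).map EVset = (perms n : Multiset (List ℕ)).map DesSet := by
  induction n with
  | zero => simp [perms, EVset, DesSet]
  | succ n ih =>
    have hev := map_perms_succ (n := n) EVset (fun S => evInsert S n) fun σ hσ k hk => by
      rw [EVset_insertIdx (length_of_mem_perms hσ ▸ hk) (lt_of_mem_perms hσ),
        length_of_mem_perms hσ]
    have hdes := map_perms_succ (n := n) DesSet (fun S => desInsert S n) fun σ hσ k hk => by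
      rw [DesSet_insertIdx (length_of_mem_perms hσ ▸ hk) (lt_of_mem_perms hσ),
        length_of_mem_perms hσ]
    rw [hev, hdes, ← ih]
    refine Multiset.bind_congr fun S hS => map_evInsert_eq_map_desInsert ?_
    obtain ⟨σ, hσ, rfl⟩ := Multiset.mem_map.1 hS
    exact length_of_mem_perms hσ ▸ EVset_subset_Ioo σ

/-- the bistatistic `(veh', SIVEH)` is Euler–Mahonian on `S_n`:
it is jointly equidistributed with `(des, MAJ)`; equivalently there is a bijection
`Θ : S_n → S_n` with `EV(Θ(π)) = Des(π)` for all `π`. -/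
theorem veh_siveh_euler_mahonian (n : ℕ) :
    ((perms n).map (fun l =>
        (MvPolynomial.X 0 : MvPolynomial (Fin 2) ℚ) ^ (EVset l).card *
          MvPolynomial.X 1 ^ (∑ i ∈ EVset l, i))).sum =
      ((perms n).map (fun l =>
        (MvPolynomial.X 0 : MvPolynomial (Fin 2) ℚ) ^ (DesSet l).card *
          MvPolynomial.X 1 ^ (∑ i ∈ DesSet l, i))).sum ∧
    ∃ F : List ℕ → List ℕ,
      (∀ l ∈ perms n, F l ∈ perms n) ∧
      (∀ l ∈ perms n, ∀ l' ∈ perms n, F l = F l' → l = l') ∧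
      (∀ m ∈ perms n, ∃ l ∈ perms n, F l = m) ∧
      (∀ l ∈ perms n, EVset (F l) = DesSet l) := by
  have hmap := map_EVset_perms n
  refine ⟨?_, ?_⟩
  · have hsum := congrArg (fun M : Multiset (Finset ℕ) => (M.map fun S =>
      (MvPolynomial.X 0 : MvPolynomial (Fin 2) ℚ) ^ S.card * MvPolynomial.X 1 ^ (∑ i ∈ S, i)).sum)
      hmap
    simpa only [Multiset.map_map, Function.comp_def, Multiset.map_coe, Multiset.sum_coe,
      List.map_map] using hsum
  · have hval : (perms n).toFinset.val = ↑(perms n) := by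
      rw [List.toFinset_val, (nodup_perms n).dedup]
    obtain ⟨F, ⟨hmaps, hinj, hsurj⟩, hF⟩ :=
      exists_bijOn_of_map_eq_map (s := (perms n).toFinset) (f := DesSet) (g := EVset)
        (by rw [hval, hmap])
    simp only [Set.MapsTo, Set.InjOn, Set.SurjOn, Set.subset_def, Set.mem_image, Finset.mem_coe,
      List.mem_toFinset] at hmaps hinj hsurj hF
    exact ⟨F, hmaps, hinj, hsurj, hF⟩

end FS
end
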